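/- arXiv:0706.2434 — 10 statements merged into one kernel-verified Lean document; each statement's English description precedes it below -/
import Mathlib

section
/- Assume β_I(R)<∞ and f̂* := sup_{w∈ℝ²} (f*f)(w) < ∞, where (f*f)(w)=∫_{ℝ²} f(u)f(w−u)du. Then for all λ_p>0 and c̄>0, P₁(R,c̄,λ_p)·P₂(R,c̄) ≥ exp(−λ_p c̄ β_I(R)) · exp(−c̄ f̂* β_I(R)); that is, the success probability in the clustered network is at least P_p(λ_p c̄)·P_p(c̄ f̂*). -/
open MeasureTheory ProbabilityTheory Filter Real
open scoped ProbabilityTheory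

local notation "E2" => EuclideanSpace ℝ (Fin 2)

/-!
With `k u = g (u - z) / (g z / T + g (u - z)) ∈ [0, 1]` we have `β y = ∫ k (x - y) f x dx`,
a convolution of `f` with the reflected kernel, so Fubini gives `∫ β = ∫ k = β_I`.

`P₁`: since `1 - e^{-t} ≤ t`, the exponent of `P₁` is at most `λ_p c̄ ∫ β = λ_p c̄ β_I`.

`P₂`: by Jensen's inequality for `exp` against the density `f`, `P₂ ≥ exp (-c̄ ∫ β f)`.
Substituting `x = y + w`, `∫ β f = ∫ k w (∫ f y f (y + w) dy) dw`; for an even `f` the inner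
integral is `(f ⋆ f) (-w) ≤ f̂*`, whence `∫ β f ≤ f̂* β_I`.
-/

open Set ContinuousLinearMap
open scoped Convolution

section ExpBounds

variable {α : Type*} [MeasurableSpace α] {μ : Measure α}

theorem integral_one_sub_exp_neg_le {b : α → ℝ} (hb : Integrable b μ) (hb0 : 0 ≤ᵐ[μ] b) :
    ∫ x, (1 - exp (-b x)) ∂μ ≤ ∫ x, b x ∂μ :=
  integral_mono_of_nonneg
    (hb0.mono fun x hx => sub_nonneg.2 (exp_le_one_iff.2 (neg_nonpos.2 hx))) hb
    (Eventually.of_forall fun x => by linarith [add_one_le_exp (-b x)])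

theorem exp_neg_integral_mul_le {b f : α → ℝ} (hf : Integrable f μ) (hf0 : ∀ x, 0 ≤ f x)
    (hf1 : ∫ x, f x ∂μ = 1) (hbf : Integrable (fun x => b x * f x) μ)
    (hebf : Integrable (fun x => exp (-b x) * f x) μ) :
    exp (-∫ x, b x * f x ∂μ) ≤ ∫ x, exp (-b x) * f x ∂μ := by
  set s := ∫ x, b x * f x ∂μ
  -- the tangent line of `t ↦ exp (-t)` at `s`
  have tangent (x : α) : exp (-s) * ((1 + s) * f x - b x * f x) ≤ exp (-b x) * f x := by
    have hline : exp (-s) * (1 + s - b x) ≤ exp (-b x) := by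
      calc exp (-s) * (1 + s - b x) ≤ exp (-s) * exp (s - b x) := by
            gcongr; linarith [add_one_le_exp (s - b x)]
        _ = exp (-b x) := by rw [← exp_add]; ring_nf
    calc exp (-s) * ((1 + s) * f x - b x * f x) = exp (-s) * (1 + s - b x) * f x := by ring
      _ ≤ exp (-b x) * f x := by gcongr; exact hf0 x
  calc exp (-s) = ∫ x, exp (-s) * ((1 + s) * f x - b x * f x) ∂μ := by
        rw [integral_const_mul, integral_sub (hf.const_mul _) hbf, integral_const_mul, hf1]
        ring
    _ ≤ ∫ x, exp (-b x) * f x ∂μ :=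
        integral_mono (((hf.const_mul _).sub hbf).const_mul _) hebf tangent

end ExpBounds

section KernelAverage

variable {G : Type*} [AddCommGroup G] [MeasurableSpace G] {μ : Measure G} {k f : G → ℝ}

variable (μ) in
noncomputable def kernelAverage (k f : G → ℝ) (y : G) : ℝ := ∫ x, k (x - y) * f x ∂μ

theorem kernelAverage_eq_convolution :
    kernelAverage μ k f = f ⋆[mul ℝ ℝ, μ] fun u => k (-u) := by
  ext y
  simp only [kernelAverage, convolution_mul, neg_sub, mul_comm]

theorem integrable_kernelAverage [MeasurableAdd₂ G] [MeasurableNeg G] [SFinite μ]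
    [μ.IsAddLeftInvariant] [μ.IsNegInvariant] (hk : Integrable k μ) (hf : Integrable f μ) :
    Integrable (kernelAverage μ k f) μ := by
  rw [kernelAverage_eq_convolution]
  exact hf.integrable_convolution _ hk.comp_neg

theorem integral_kernelAverage [MeasurableAdd₂ G] [MeasurableNeg G] [SFinite μ]
    [μ.IsAddLeftInvariant] [μ.IsNegInvariant] (hk : Integrable k μ) (hf : Integrable f μ) :
    ∫ y, kernelAverage μ k f y ∂μ = (∫ x, f x ∂μ) * ∫ u, k u ∂μ := by
  rw [kernelAverage_eq_convolution, integral_convolution _ hf hk.comp_neg,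
    integral_neg_eq_self (fun u => k u)]
  rfl

theorem kernelAverage_mem_Icc [MeasurableAdd G] [μ.IsAddRightInvariant]
    (hk01 : ∀ᵐ u ∂μ, k u ∈ Icc 0 1) (hf : Integrable f μ)
    (hf0 : ∀ x, 0 ≤ f x) (y : G) : kernelAverage μ k f y ∈ Icc 0 (∫ x, f x ∂μ) := by
  have hk01' : ∀ᵐ x ∂μ, k (x - y) ∈ Icc 0 1 :=
    (measurePreserving_sub_right μ y).quasiMeasurePreserving.ae hk01
  have hnonneg : 0 ≤ᵐ[μ] fun x => k (x - y) * f x :=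
    hk01'.mono fun x hx => mul_nonneg hx.1 (hf0 x)
  refine ⟨integral_nonneg_of_ae hnonneg, integral_mono_of_nonneg hnonneg hf ?_⟩
  exact hk01'.mono fun x hx => mul_le_of_le_one_left (hf0 x) hx.2

theorem integral_mul_add_eq_convolution_neg (hf_even : ∀ x, f (-x) = f x) (w : G) :
    ∫ y, f y * f (y + w) ∂μ = (f ⋆[mul ℝ ℝ, μ] f) (-w) := by
  rw [convolution_mul]
  congr with y
  rw [← hf_even (y + w)]
  congr 2
  abel

theorem integral_kernelAverage_mul_le [MeasurableAdd₂ G] [SFinite μ] [μ.IsAddLeftInvariant]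
    {C : ℝ} (hk : Integrable k μ) (hk01 : ∀ᵐ u ∂μ, k u ∈ Icc 0 1) (hf : Integrable f μ)
    (hf0 : ∀ x, 0 ≤ f x) (hC : ∀ w, ∫ y, f y * f (y + w) ∂μ ≤ C) :
    ∫ y, kernelAverage μ k f y * f y ∂μ ≤ C * ∫ u, k u ∂μ := by
  have hshift (y : G) : kernelAverage μ k f y * f y = ∫ w, k w * (f y * f (y + w)) ∂μ := by
    rw [kernelAverage, ← integral_mul_const, ← integral_add_left_eq_self _ y]
    simp only [add_sub_cancel_left]
    congr with w
    ring
  have hprod : Integrable (fun p : G × G => k p.2 * (f p.1 * f (p.1 + p.2))) (μ.prod μ) := by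
    have hff : Integrable (fun p : G × G => f p.1 * f (p.1 + p.2)) (μ.prod μ) :=
      (measurePreserving_prod_add μ μ).integrable_comp_of_integrable (hf.mul_prod hf)
    refine hff.bdd_mul (c := 1)
      (hk.aestronglyMeasurable.comp_quasiMeasurePreserving Measure.quasiMeasurePreserving_snd) ?_
    exact (Measure.quasiMeasurePreserving_snd.ae hk01).mono fun p hp => by
      rw [Real.norm_of_nonneg hp.1]; exact hp.2
  calc ∫ y, kernelAverage μ k f y * f y ∂μ = ∫ y, ∫ w, k w * (f y * f (y + w)) ∂μ ∂μ := by
        simp only [hshift]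
    _ = ∫ w, k w * ∫ y, f y * f (y + w) ∂μ ∂μ := by
        rw [integral_integral_swap hprod]
        simp only [integral_const_mul]
    _ ≤ ∫ w, k w * C ∂μ := by
        refine integral_mono_of_nonneg ?_ (hk.mul_const C) ?_
        · exact hk01.mono fun w hw => mul_nonneg hw.1
            (integral_nonneg fun y => mul_nonneg (hf0 y) (hf0 _))
        · exact hk01.mono fun w hw => mul_le_mul_of_nonneg_left (hC w) hw.1
    _ = C * ∫ u, k u ∂μ := by rw [integral_mul_const, mul_comm]

theorem integral_one_sub_exp_neg_mul_kernelAverage_le [MeasurableAdd₂ G] [MeasurableNeg G]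
    [SFinite μ] [μ.IsAddLeftInvariant] [μ.IsNegInvariant] {c : ℝ} (hc : 0 ≤ c)
    (hk : Integrable k μ) (hk01 : ∀ᵐ u ∂μ, k u ∈ Icc 0 1) (hf : Integrable f μ)
    (hf0 : ∀ x, 0 ≤ f x) (hf1 : ∫ x, f x ∂μ = 1) :
    ∫ y, (1 - exp (-(c * kernelAverage μ k f y))) ∂μ ≤ c * ∫ u, k u ∂μ := by
  calc ∫ y, (1 - exp (-(c * kernelAverage μ k f y))) ∂μ ≤ ∫ y, c * kernelAverage μ k f y ∂μ :=
        integral_one_sub_exp_neg_le ((integrable_kernelAverage hk hf).const_mul c) <|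
          ae_of_all _ fun y => mul_nonneg hc (kernelAverage_mem_Icc hk01 hf hf0 y).1
    _ = c * ∫ u, k u ∂μ := by rw [integral_const_mul, integral_kernelAverage hk hf, hf1, one_mul]

theorem exp_neg_mul_le_integral_exp_neg_mul_kernelAverage [MeasurableAdd₂ G] [MeasurableNeg G]
    [SFinite μ] [μ.IsAddLeftInvariant] [μ.IsNegInvariant] {c C : ℝ} (hc : 0 ≤ c)
    (hk : Integrable k μ) (hk01 : ∀ᵐ u ∂μ, k u ∈ Icc 0 1) (hf : Integrable f μ)
    (hf0 : ∀ x, 0 ≤ f x) (hf1 : ∫ x, f x ∂μ = 1) (hC : ∀ w, ∫ y, f y * f (y + w) ∂μ ≤ C) :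
    exp (-(c * C * ∫ u, k u ∂μ)) ≤ ∫ y, exp (-(c * kernelAverage μ k f y)) * f y ∂μ := by
  set β := kernelAverage μ k f
  have hcβ_meas : AEStronglyMeasurable (fun y => c * β y) μ :=
    (integrable_kernelAverage hk hf).aestronglyMeasurable.const_mul c
  have hcβ_nonneg (y : G) : 0 ≤ c * β y := mul_nonneg hc (kernelAverage_mem_Icc hk01 hf hf0 y).1
  have hcβ_le (y : G) : c * β y ≤ c := by
    simpa [hf1] using mul_le_mul_of_nonneg_left (kernelAverage_mem_Icc hk01 hf hf0 y).2 hc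
  have hβf : Integrable (fun y => c * β y * f y) μ :=
    hf.bdd_mul hcβ_meas <| ae_of_all _ fun y => by
      rw [norm_of_nonneg (hcβ_nonneg y)]; exact hcβ_le y
  have hexpβf : Integrable (fun y => exp (-(c * β y)) * f y) μ :=
    hf.bdd_mul (c := 1) (continuous_exp.comp_aestronglyMeasurable hcβ_meas.neg) <|
      ae_of_all _ fun y => by
        rw [norm_of_nonneg (exp_nonneg _), exp_le_one_iff, neg_nonpos]; exact hcβ_nonneg y
  calc exp (-(c * C * ∫ u, k u ∂μ)) ≤ exp (-∫ y, c * β y * f y ∂μ) := by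
        gcongr
        simp only [mul_assoc, integral_const_mul]
        exact mul_le_mul_of_nonneg_left (integral_kernelAverage_mul_le hk hk01 hf hf0 hC) hc
    _ ≤ ∫ y, exp (-(c * β y)) * f y ∂μ := exp_neg_integral_mul_le hf hf0 hf1 hβf hexpβf

end KernelAverage

theorem stmt_2_general
    (g f : E2 → ℝ) (T R lamp cbar : ℝ)
    (hT : 0 < T) (hR : 0 < R) (hlamp : 0 < lamp) (hcbar : 0 < cbar)
    (hg_pos : ∀ x : E2, x ≠ 0 → 0 < g x)
    (hf_nonneg : ∀ x, 0 ≤ f x)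
    (hf_prob : ∫ x, f x = 1)
    (hf_iso : ∀ x y : E2, ‖x‖ = ‖y‖ → f x = f y)
    (z : E2) (hz : z = EuclideanSpace.single (0 : Fin 2) R)
    (β : E2 → ℝ)
    (hβ : ∀ y, β y = ∫ x, g (x - y - z) / (g z / T + g (x - y - z)) * f x)
    (βI : ℝ) (hβI : βI = ∫ u, g u / (g z / T + g u))
    (hβI_fin : Integrable fun u : E2 => g u / (g z / T + g u))
    (fstar : ℝ) (hfstar : fstar = ⨆ w : E2, ∫ u, f u * f (w - u))
    (hfstar_bdd : BddAbove (Set.range fun w : E2 => ∫ u, f u * f (w - u)))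
    (P1 P2 : ℝ)
    (hP1 : P1 = Real.exp (-(lamp * ∫ y, (1 - Real.exp (-(cbar * β y))))))
    (hP2 : P2 = ∫ y, Real.exp (-(cbar * β y)) * f y) :
    Real.exp (-(lamp * cbar * βI)) * Real.exp (-(cbar * fstar * βI)) ≤ P1 * P2 := by
  have hz0 : z ≠ 0 := by simpa [hz] using hR.ne'
  set k : E2 → ℝ := fun u => g (u - z) / (g z / T + g (u - z))
  have hk : Integrable k := hβI_fin.comp_sub_right z
  have hk01 : ∀ᵐ u, k u ∈ Icc 0 1 := by
    have hne : ∀ᵐ u : E2, u ≠ z := by simp [ae_iff, measure_singleton]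
    refine hne.mono fun u hu => ?_
    have hgz : 0 ≤ g z / T := div_nonneg (hg_pos z hz0).le hT.le
    have hgu : 0 < g (u - z) := hg_pos _ (sub_ne_zero.2 hu)
    exact ⟨by positivity, div_le_one_of_le₀ (by linarith) (by positivity)⟩
  have hkβI : ∫ u, k u = βI := by
    rw [hβI]
    exact integral_sub_right_eq_self (fun u => g u / (g z / T + g u)) z
  have hf : Integrable f := .of_integral_ne_zero (by simp [hf_prob])
  have hC (w : E2) : ∫ y, f y * f (y + w) ≤ fstar := by
    rw [integral_mul_add_eq_convolution_neg (fun x => hf_iso _ _ (norm_neg x)), hfstar]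
    exact le_ciSup hfstar_bdd (-w)
  obtain rfl : β = kernelAverage volume k f := funext hβ
  have hP1_ge : exp (-(lamp * cbar * βI)) ≤ P1 := by
    rw [hP1, exp_le_exp, neg_le_neg_iff, mul_assoc, ← hkβI]
    gcongr
    exact integral_one_sub_exp_neg_mul_kernelAverage_le hcbar.le hk hk01 hf hf_nonneg hf_prob
  have hP2_ge : exp (-(cbar * fstar * βI)) ≤ P2 := by
    rw [hP2, ← hkβI]
    exact exp_neg_mul_le_integral_exp_neg_mul_kernelAverage hcbar.le hk hk01 hf hf_nonneg hf_prob
      hC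
  exact mul_le_mul hP1_ge hP2_ge (exp_nonneg _) ((exp_nonneg _).trans hP1_ge)

/-- Lower bound on the success probability of a Neyman–Scott clustered network
under Rayleigh fading: `P₁(R,c̄,λ_p)·P₂(R,c̄) ≥ P_p(λ_p c̄)·P_p(c̄ f̂*)`. -/
theorem stmt_2
    (g f : E2 → ℝ) (T R lamp cbar : ℝ)
    (hT : 0 < T) (hR : 0 < R) (hlamp : 0 < lamp) (hcbar : 0 < cbar)
    (hg_pos : ∀ x : E2, x ≠ 0 → 0 < g x)
    (hg_cont : ContinuousOn g {(0 : E2)}ᶜ)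
    (hg_mono : ∀ x y : E2, x ≠ 0 → y ≠ 0 → ‖x‖ ≤ ‖y‖ → g y ≤ g x)
    (hg_int : ∀ ε : ℝ, 0 < ε → IntegrableOn g (Metric.ball (0 : E2) ε)ᶜ)
    (hf_meas : Measurable f) (hf_nonneg : ∀ x, 0 ≤ f x)
    (hf_prob : ∫ x, f x = 1)
    (hf_iso : ∀ x y : E2, ‖x‖ = ‖y‖ → f x = f y)
    (z : E2) (hz : z = EuclideanSpace.single (0 : Fin 2) R)
    (β : E2 → ℝ)
    (hβ : ∀ y, β y = ∫ x, g (x - y - z) / (g z / T + g (x - y - z)) * f x)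
    (βI : ℝ) (hβI : βI = ∫ u, g u / (g z / T + g u))
    (hβI_fin : Integrable fun u : E2 => g u / (g z / T + g u))
    (fstar : ℝ) (hfstar : fstar = ⨆ w : E2, ∫ u, f u * f (w - u))
    (hfstar_bdd : BddAbove (Set.range fun w : E2 => ∫ u, f u * f (w - u)))
    (P1 P2 : ℝ)
    (hP1 : P1 = Real.exp (-(lamp * ∫ y, (1 - Real.exp (-(cbar * β y))))))
    (hP2 : P2 = ∫ y, Real.exp (-(cbar * β y)) * f y) :
    Real.exp (-(lamp * cbar * βI)) * Real.exp (-(cbar * fstar * βI)) ≤ P1 * P2 :=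
  stmt_2_general g f T R lamp cbar hT hR hlamp hcbar hg_pos hf_nonneg hf_prob hf_iso z hz β hβ βI
    hβI hβI_fin fstar hfstar hfstar_bdd P1 P2 hP1 hP2
end

section
/- Assume β_I(R)<∞ and let β̂ := sup_{y∈ℝ²} β(R,y). Then for all λ_p>0 and c̄>0, P₁(R,c̄,λ_p)·P₂(R,c̄) ≤ exp(−(λ_p c̄/(1+c̄ β̂)) β_I(R)) = P_p(λ_p c̄/(1+c̄ β̂)). -/
/-! The kernel k(u) = g(u) / (g(z)/T + g(u)) takes values in [0, 1] off the origin, so β(R, ·),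
a correlation of k with the density f, takes values in [0, 1] and, by Fubini, integrates to
β_I(R).
Since 1 - e^{-t} ≥ t / (1 + c̄β̂) for 0 ≤ t ≤ c̄β̂, the exponent of P₁ is at least
λ_p c̄ β_I(R) / (1 + c̄β̂), while P₂ ≤ ∫ f = 1. -/

open MeasureTheory ProbabilityTheory Filter Real
open scoped ProbabilityTheory

local notation "E2" => EuclideanSpace ℝ (Fin 2)

open scoped Convolution

theorem integral_mul_mem_Icc_of_mem_Icc {α : Type*} [MeasurableSpace α] {μ : Measure α}
    {φ f : α → ℝ} (hφ : ∀ᵐ x ∂μ, φ x ∈ Set.Icc 0 1) (hf_nonneg : ∀ x, 0 ≤ f x)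
    (hf : Integrable f μ) :
    ∫ x, φ x * f x ∂μ ∈ Set.Icc 0 (∫ x, f x ∂μ) := by
  have h_nonneg : 0 ≤ᵐ[μ] fun x => φ x * f x :=
    hφ.mono fun x hx => mul_nonneg hx.1 (hf_nonneg x)
  exact ⟨integral_nonneg_of_ae h_nonneg, integral_mono_of_nonneg h_nonneg hf
    (hφ.mono fun x hx => mul_le_of_le_one_left (hf_nonneg x) hx.2)⟩

section Correlation

variable {G : Type*} [AddGroup G] [MeasurableSpace G] {μ : Measure G} {k f : G → ℝ}

theorem integral_mul_comp_sub_mem_Icc [MeasurableAdd G] [μ.IsAddRightInvariant]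
    (hk : ∀ᵐ u ∂μ, k u ∈ Set.Icc 0 1) (hf_nonneg : ∀ x, 0 ≤ f x) (hf : Integrable f μ)
    (y : G) :
    ∫ x, k (x - y) * f x ∂μ ∈ Set.Icc 0 (∫ x, f x ∂μ) :=
  integral_mul_mem_Icc_of_mem_Icc
    ((measurePreserving_sub_right μ y).quasiMeasurePreserving.ae hk) hf_nonneg hf

theorem integral_mul_comp_sub_eq_convolution (y : G) :
    ∫ x, k (x - y) * f x ∂μ =
      (f ⋆[ContinuousLinearMap.mul ℝ ℝ, μ] fun u => k (-u)) y := by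
  simp only [convolution_mul, neg_sub, mul_comm (f _)]

variable [MeasurableAdd₂ G] [MeasurableNeg G] [SFinite μ] [μ.IsAddRightInvariant]
  [μ.IsNegInvariant]

theorem Integrable.integral_mul_comp_sub (hk : Integrable k μ) (hf : Integrable f μ) :
    Integrable (fun y => ∫ x, k (x - y) * f x ∂μ) μ := by
  simp only [integral_mul_comp_sub_eq_convolution]
  exact hf.integrable_convolution _ hk.comp_neg

theorem integral_integral_mul_comp_sub (hk : Integrable k μ) (hf : Integrable f μ) :
    ∫ y, ∫ x, k (x - y) * f x ∂μ ∂μ = (∫ x, k x ∂μ) * ∫ x, f x ∂μ := by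
  simp only [integral_mul_comp_sub_eq_convolution]
  rw [integral_convolution _ hf hk.comp_neg, integral_neg_eq_self k μ]
  exact mul_comm _ _

end Correlation

theorem div_one_add_le_one_sub_exp_neg {t M : ℝ} (ht : 0 ≤ t) (htM : t ≤ M) :
    t / (1 + M) ≤ 1 - exp (-t) := by
  have h_exp : exp (-t) * (1 + t) ≤ 1 := by
    rw [exp_neg, inv_mul_le_iff₀ (exp_pos t)]
    linarith [add_one_le_exp t]
  calc t / (1 + M) ≤ t / (1 + t) := by gcongr
    _ ≤ 1 - exp (-t) := by rw [div_le_iff₀ (by linarith)]; linarith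

theorem mul_integral_le_integral_one_sub_exp_neg {α : Type*} [MeasurableSpace α] {μ : Measure α}
    {β : α → ℝ} {c M : ℝ} (hc : 0 ≤ c) (hβ : Integrable β μ)
    (hβ_nonneg : ∀ y, 0 ≤ β y) (hβM : ∀ y, β y ≤ M) :
    c / (1 + c * M) * ∫ y, β y ∂μ ≤ ∫ y, (1 - exp (-(c * β y))) ∂μ := by
  have hcβ : ∀ y, 0 ≤ c * β y := fun y => mul_nonneg hc (hβ_nonneg y)
  have h_int : Integrable (fun y => 1 - exp (-(c * β y))) μ := by
    refine (hβ.const_mul c).mono' (by fun_prop) (ae_of_all _ fun y => ?_)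
    rw [Real.norm_eq_abs, abs_le]
    constructor <;>
      linarith [one_sub_le_exp_neg (c * β y), exp_le_one_iff.mpr (neg_nonpos.mpr (hcβ y))]
  rw [← integral_const_mul]
  refine integral_mono (hβ.const_mul _) h_int fun y => ?_
  rw [div_mul_eq_mul_div]
  exact div_one_add_le_one_sub_exp_neg (hcβ y) (mul_le_mul_of_nonneg_left (hβM y) hc)

theorem stmt_3_general
    (g f : E2 → ℝ) (T R lamp cbar : ℝ)
    (hT : 0 < T) (hR : 0 < R) (hlamp : 0 < lamp) (hcbar : 0 < cbar)
    (hg_pos : ∀ x : E2, x ≠ 0 → 0 < g x)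
    (hf_nonneg : ∀ x, 0 ≤ f x)
    (hf_prob : ∫ x, f x = 1)
    (z : E2) (hz : z = EuclideanSpace.single (0 : Fin 2) R)
    (β : E2 → ℝ)
    (hβ : ∀ y, β y = ∫ x, g (x - y - z) / (g z / T + g (x - y - z)) * f x)
    (βI : ℝ) (hβI : βI = ∫ u, g u / (g z / T + g u))
    (hβI_fin : Integrable fun u : E2 => g u / (g z / T + g u))
    (βhat : ℝ) (hβhat : βhat = ⨆ y : E2, β y)
    (P1 P2 : ℝ)
    (hP1 : P1 = Real.exp (-(lamp * ∫ y, (1 - Real.exp (-(cbar * β y))))))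
    (hP2 : P2 = ∫ y, Real.exp (-(cbar * β y)) * f y) :
    P1 * P2 ≤ Real.exp (-(lamp * cbar / (1 + cbar * βhat) * βI)) := by
  set k : E2 → ℝ := fun u => g u / (g z / T + g u)
  have hgzT : 0 ≤ g z / T := div_nonneg (hg_pos z (by simp [hz, hR.ne'])).le hT.le
  have hk : ∀ᵐ u, k u ∈ Set.Icc 0 1 := (volume.ae_ne 0).mono fun u hu =>
    have hgu := hg_pos u hu
    ⟨div_nonneg hgu.le (by linarith), div_le_one_of_le₀ (by linarith) (by linarith)⟩
  have hf : Integrable f := .of_integral_ne_zero (by simp [hf_prob])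
  have hβ_eq : β = fun y => ∫ x, k (x - (y + z)) * f x := funext fun y => by
    simp only [hβ, k, sub_sub]
  have hβ_Icc : ∀ y, β y ∈ Set.Icc 0 1 := fun y => by
    simpa [hβ_eq, hf_prob] using integral_mul_comp_sub_mem_Icc hk hf_nonneg hf (y + z)
  have hβ_int : Integrable β :=
    hβ_eq ▸ (Integrable.integral_mul_comp_sub hβI_fin hf).comp_add_right z
  have hβ_integral : ∫ y, β y = βI := by
    rw [hβ_eq, integral_add_right_eq_self (fun y => ∫ x, k (x - y) * f x) z,
      integral_integral_mul_comp_sub hβI_fin hf, hf_prob, mul_one, hβI]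
  have hβ_le_hat : ∀ y, β y ≤ βhat := fun y =>
    hβhat ▸ le_ciSup ⟨1, Set.forall_mem_range.mpr fun y => (hβ_Icc y).2⟩ y
  have hP2_le : P2 ≤ 1 := by
    refine hP2 ▸ hf_prob ▸ (integral_mul_mem_Icc_of_mem_Icc (ae_of_all _ fun y => ?_)
      hf_nonneg hf).2
    exact ⟨(exp_pos _).le, exp_le_one_iff.mpr (by nlinarith [(hβ_Icc y).1])⟩
  have h_gain := mul_integral_le_integral_one_sub_exp_neg hcbar.le hβ_int
    (fun y => (hβ_Icc y).1) hβ_le_hat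
  calc P1 * P2 ≤ P1 := mul_le_of_le_one_right (hP1 ▸ (exp_pos _).le) hP2_le
    _ ≤ exp (-(lamp * (cbar / (1 + cbar * βhat) * βI))) := by
      rw [hP1, ← hβ_integral]
      exact exp_le_exp.mpr (neg_le_neg (mul_le_mul_of_nonneg_left h_gain hlamp.le))
    _ = exp (-(lamp * cbar / (1 + cbar * βhat) * βI)) := by ring_nf

/-- Upper bound on the success probability of a Neyman–Scott clustered network
under Rayleigh fading: `P₁(R,c̄,λ_p)·P₂(R,c̄) ≤ P_p(λ_p c̄ / (1 + c̄ β̂))`. -/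
theorem stmt_3
    (g f : E2 → ℝ) (T R lamp cbar : ℝ)
    (hT : 0 < T) (hR : 0 < R) (hlamp : 0 < lamp) (hcbar : 0 < cbar)
    (hg_pos : ∀ x : E2, x ≠ 0 → 0 < g x)
    (hg_cont : ContinuousOn g {(0 : E2)}ᶜ)
    (hg_mono : ∀ x y : E2, x ≠ 0 → y ≠ 0 → ‖x‖ ≤ ‖y‖ → g y ≤ g x)
    (hg_int : ∀ ε : ℝ, 0 < ε → IntegrableOn g (Metric.ball (0 : E2) ε)ᶜ)
    (hf_meas : Measurable f) (hf_nonneg : ∀ x, 0 ≤ f x)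
    (hf_prob : ∫ x, f x = 1)
    (hf_iso : ∀ x y : E2, ‖x‖ = ‖y‖ → f x = f y)
    (z : E2) (hz : z = EuclideanSpace.single (0 : Fin 2) R)
    (β : E2 → ℝ)
    (hβ : ∀ y, β y = ∫ x, g (x - y - z) / (g z / T + g (x - y - z)) * f x)
    (βI : ℝ) (hβI : βI = ∫ u, g u / (g z / T + g u))
    (hβI_fin : Integrable fun u : E2 => g u / (g z / T + g u))
    (βhat : ℝ) (hβhat : βhat = ⨆ y : E2, β y)
    (P1 P2 : ℝ)
    (hP1 : P1 = Real.exp (-(lamp * ∫ y, (1 - Real.exp (-(cbar * β y))))))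
    (hP2 : P2 = ∫ y, Real.exp (-(cbar * β y)) * f y) :
    P1 * P2 ≤ Real.exp (-(lamp * cbar / (1 + cbar * βhat) * βI)) :=
  stmt_3_general g f T R lamp cbar hT hR hlamp hcbar hg_pos hf_nonneg hf_prob z hz β hβ βI hβI
    hβI_fin βhat hβhat P1 P2 hP1 hP2
end

section
/- Assume β_I(R)<∞ and let β̂ := sup_{y∈ℝ²} β(R,y) > 0 and κ := ∫_{ℝ²} β(R,y) f(y) dy. Then for all λ_p>0 and c̄>0, P₁(R,c̄,λ_p)·P₂(R,c̄) ≤ P_p(λ_p c̄ (1−e^{−c̄β̂})/(c̄β̂)) · [1 − (1−e^{−c̄β̂}) κ/β̂]. -/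
open MeasureTheory ProbabilityTheory Filter Real
open scoped ProbabilityTheory

local notation "E2" => EuclideanSpace ℝ (Fin 2)

/-!
Since `0 ≤ β ≤ β̂`, convexity of `t ↦ exp (-c̄ t)` puts it below its chord on `[0, β̂]`:
`exp (-c̄ β) ≤ 1 - (1 - e^{-c̄β̂}) β / β̂`. Integrating the chord bound against `f` bounds `P₂`;
integrating it over `ℝ²` gives `∫ (1 - e^{-c̄β}) ≥ (1 - e^{-c̄β̂}) / β̂ · ∫ β`, and `∫ β = β_I`
because `β` is a convolution of `f` with a reflected translate of `g / (g z / T + g)`.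
-/

lemma exp_neg_mul_le_chord {c b t : ℝ} (hb : 0 < b) (ht0 : 0 ≤ t) (htb : t ≤ b) :
    exp (-(c * t)) ≤ 1 - (1 - exp (-(c * b))) * t / b := by
  have hs0 : 0 ≤ t / b := div_nonneg ht0 hb.le
  have hs1 : 0 ≤ 1 - t / b := sub_nonneg.2 ((div_le_one hb).2 htb)
  have hconv := convexOn_exp.2 (Set.mem_univ (-(c * b))) (Set.mem_univ 0) hs0 hs1
    (add_sub_cancel _ _)
  have harg : (t / b) • -(c * b) + (1 - t / b) • (0 : ℝ) = -(c * t) := by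
    simp only [smul_eq_mul, mul_zero, add_zero]; field_simp
  rw [harg, smul_eq_mul, smul_eq_mul, exp_zero] at hconv
  linarith [show 1 - (1 - exp (-(c * b))) * t / b = t / b * exp (-(c * b)) + (1 - t / b) * 1 by
    ring]

lemma integral_comp_sub_mul_mem_Icc {G : Type*} [AddGroup G] [MeasurableSpace G] {μ : Measure G}
    [NullSingletonClass μ] {k f : G → ℝ} (hk : ∀ u ≠ 0, k u ∈ Set.Icc 0 1) (hf0 : 0 ≤ f)
    (hf : Integrable f μ) (a : G) :
    ∫ x, k (x - a) * f x ∂μ ∈ Set.Icc 0 (∫ x, f x ∂μ) := by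
  have hka : ∀ᵐ x ∂μ, k (x - a) ∈ Set.Icc 0 1 :=
    (Measure.ae_ne μ a).mono fun x hx => hk _ (sub_ne_zero.2 hx)
  refine ⟨integral_nonneg_of_ae ?_, integral_mono_of_nonneg ?_ hf ?_⟩ <;>
    filter_upwards [hka] with x hx
  · exact mul_nonneg hx.1 (hf0 x)
  · exact mul_nonneg hx.1 (hf0 x)
  · exact mul_le_of_le_one_left (hf0 x) hx.2

lemma integral_comp_sub_sub_mul_eq_convolution {G : Type*} [AddCommGroup G] [MeasurableSpace G]
    {μ : Measure G} (k f : G → ℝ) (z : G) :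
    (fun y => ∫ x, k (x - y - z) * f x ∂μ)
      = convolution f (fun w => k (-(w + z))) (ContinuousLinearMap.mul ℝ ℝ) μ := by
  ext y
  rw [convolution_def]
  congr with x
  rw [ContinuousLinearMap.mul_apply', mul_comm]
  congr 2
  abel

section Convolution

variable {G : Type*} [AddCommGroup G] [MeasurableSpace G] [MeasurableAdd₂ G] [MeasurableNeg G]
  {μ : Measure G} [SFinite μ] [μ.IsAddRightInvariant] [μ.IsNegInvariant] {k f : G → ℝ}

lemma Integrable.integral_comp_sub_sub_mul (hk : Integrable k μ) (hf : Integrable f μ) (z : G) :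
    Integrable (fun y => ∫ x, k (x - y - z) * f x ∂μ) μ := by
  rw [integral_comp_sub_sub_mul_eq_convolution]
  exact hf.integrable_convolution _ (hk.comp_neg.comp_add_right z)

lemma integral_integral_comp_sub_sub_mul (hk : Integrable k μ) (hf : Integrable f μ) (z : G) :
    ∫ y, ∫ x, k (x - y - z) * f x ∂μ ∂μ = (∫ u, k u ∂μ) * ∫ x, f x ∂μ := by
  rw [show (∫ y, ∫ x, k (x - y - z) * f x ∂μ ∂μ)
      = ∫ y, (fun y => ∫ x, k (x - y - z) * f x ∂μ) y ∂μ from rfl,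
    integral_comp_sub_sub_mul_eq_convolution,
    integral_convolution _ hf (hk.comp_neg.comp_add_right z), ContinuousLinearMap.mul_apply',
    integral_add_right_eq_self (fun w => k (-w)), integral_neg_eq_self, mul_comm]

end Convolution

section ChordBounds

variable {α : Type*} [MeasurableSpace α] {μ : Measure α} {β f : α → ℝ} {b c : ℝ}

lemma integral_exp_neg_mul_mul_le (hb : 0 < b) (hβ : ∀ y, β y ∈ Set.Icc 0 b)
    (hβm : AEStronglyMeasurable β μ) (hf0 : 0 ≤ f) (hf : Integrable f μ) :
    ∫ y, exp (-(c * β y)) * f y ∂μ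
      ≤ ∫ y, f y ∂μ - (1 - exp (-(c * b))) * (∫ y, β y * f y ∂μ) / b := by
  have hβf : Integrable (fun y => β y * f y) μ :=
    hf.bdd_mul hβm (ae_of_all _ fun y => by
      rw [norm_of_nonneg (hβ y).1]; exact (hβ y).2)
  have hchord : ∀ y, exp (-(c * β y)) * f y
      ≤ f y - (1 - exp (-(c * b))) / b * (β y * f y) := fun y => by
    have := exp_neg_mul_le_chord (c := c) hb (hβ y).1 (hβ y).2
    refine (mul_le_mul_of_nonneg_right this (hf0 y)).trans_eq ?_
    ring
  calc ∫ y, exp (-(c * β y)) * f y ∂μ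
      ≤ ∫ y, (f y - (1 - exp (-(c * b))) / b * (β y * f y)) ∂μ :=
        integral_mono_of_nonneg (ae_of_all _ fun y => mul_nonneg (exp_nonneg _) (hf0 y))
          (hf.sub (hβf.const_mul _)) (ae_of_all _ hchord)
    _ = _ := by
        rw [integral_sub hf (hβf.const_mul _), integral_const_mul]
        ring

lemma mul_integral_le_integral_one_sub_exp_neg_mul (hb : 0 < b) (hc : 0 ≤ c)
    (hβ : ∀ y, β y ∈ Set.Icc 0 b) (hβi : Integrable β μ) :
    (1 - exp (-(c * b))) / b * ∫ y, β y ∂μ ≤ ∫ y, (1 - exp (-(c * β y))) ∂μ := by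
  have hexp_le : ∀ y, exp (-(c * β y)) ≤ 1 := fun y =>
    exp_le_one_iff.2 (neg_nonpos.2 (mul_nonneg hc (hβ y).1))
  have hint : Integrable (fun y => 1 - exp (-(c * β y))) μ := by
    refine (hβi.const_mul c).mono' (by fun_prop) (ae_of_all _ fun y => ?_)
    rw [norm_of_nonneg (sub_nonneg.2 (hexp_le y))]
    linarith [one_sub_le_exp_neg (c * β y)]
  rw [← integral_const_mul]
  refine integral_mono_of_nonneg (ae_of_all _ fun y => ?_) hint (ae_of_all _ fun y => ?_)
  · have : exp (-(c * b)) ≤ 1 := exp_le_one_iff.2 (neg_nonpos.2 (mul_nonneg hc hb.le))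
    exact mul_nonneg (div_nonneg (sub_nonneg.2 this) hb.le) (hβ y).1
  · have := exp_neg_mul_le_chord (c := c) hb (hβ y).1 (hβ y).2
    simp only [div_mul_eq_mul_div]
    linarith

end ChordBounds

theorem stmt_4_general
    (g f : E2 → ℝ) (T R lamp cbar : ℝ)
    (hT : 0 < T) (hR : 0 < R) (hlamp : 0 < lamp) (hcbar : 0 < cbar)
    (hg_pos : ∀ x : E2, x ≠ 0 → 0 < g x)
    (hf_nonneg : ∀ x, 0 ≤ f x)
    (hf_prob : ∫ x, f x = 1)
    (z : E2) (hz : z = EuclideanSpace.single (0 : Fin 2) R)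
    (β : E2 → ℝ)
    (hβ : ∀ y, β y = ∫ x, g (x - y - z) / (g z / T + g (x - y - z)) * f x)
    (βI : ℝ) (hβI : βI = ∫ u, g u / (g z / T + g u))
    (hβI_fin : Integrable fun u : E2 => g u / (g z / T + g u))
    (βhat : ℝ) (hβhat : βhat = ⨆ y : E2, β y) (hβhat_pos : 0 < βhat)
    (κ : ℝ) (hκ : κ = ∫ y, β y * f y)
    (P1 P2 : ℝ)
    (hP1 : P1 = Real.exp (-(lamp * ∫ y, (1 - Real.exp (-(cbar * β y))))))
    (hP2 : P2 = ∫ y, Real.exp (-(cbar * β y)) * f y) :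
    P1 * P2 ≤ Real.exp (-(lamp * cbar * (1 - Real.exp (-(cbar * βhat))) / (cbar * βhat) * βI)) *
      (1 - (1 - Real.exp (-(cbar * βhat))) * κ / βhat) := by
  set h : E2 → ℝ := fun u => g u / (g z / T + g u)
  have hz0 : z ≠ 0 := by
    rw [hz, Ne, PiLp.single_eq_zero_iff]
    exact hR.ne'
  have hgz : 0 ≤ g z / T := div_nonneg (hg_pos z hz0).le hT.le
  have hh : ∀ u ≠ 0, h u ∈ Set.Icc 0 1 := fun u hu =>
    ⟨div_nonneg (hg_pos u hu).le (add_nonneg hgz (hg_pos u hu).le),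
      div_le_one_of_le₀ (le_add_of_nonneg_left hgz) (add_nonneg hgz (hg_pos u hu).le)⟩
  have hf : Integrable f := Integrable.of_integral_ne_zero (by rw [hf_prob]; exact one_ne_zero)
  have hβ_unit : ∀ y, β y ∈ Set.Icc 0 1 := fun y => by
    simpa only [hβ, hf_prob, sub_sub] using
      integral_comp_sub_mul_mem_Icc hh hf_nonneg hf (y + z)
  have hβ_mem : ∀ y, β y ∈ Set.Icc 0 βhat := fun y =>
    ⟨(hβ_unit y).1, hβhat ▸ le_ciSup ⟨1, Set.forall_mem_range.2 fun y => (hβ_unit y).2⟩ y⟩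
  have hβ_int : Integrable β := by
    rw [funext hβ]
    exact Integrable.integral_comp_sub_sub_mul hβI_fin hf z
  have hβ_total : ∫ y, β y = βI := by
    simp only [hβ]
    rw [integral_integral_comp_sub_sub_mul hβI_fin hf, hf_prob, mul_one, hβI]
  have hP1_le : P1 ≤ exp (-(lamp * cbar * (1 - exp (-(cbar * βhat))) / (cbar * βhat) * βI)) := by
    have hmass := mul_integral_le_integral_one_sub_exp_neg_mul hβhat_pos hcbar.le hβ_mem hβ_int
    rw [hβ_total] at hmass
    rw [hP1, show lamp * cbar * (1 - exp (-(cbar * βhat))) / (cbar * βhat) * βI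
      = lamp * ((1 - exp (-(cbar * βhat))) / βhat * βI) by field_simp]
    gcongr
  have hP2_le : P2 ≤ 1 - (1 - exp (-(cbar * βhat))) * κ / βhat := by
    simpa only [hP2, hf_prob, hκ] using
      integral_exp_neg_mul_mul_le hβhat_pos hβ_mem hβ_int.aestronglyMeasurable hf_nonneg hf
  have hP2_nonneg : 0 ≤ P2 :=
    hP2 ▸ integral_nonneg fun y => mul_nonneg (exp_nonneg _) (hf_nonneg y)
  exact mul_le_mul hP1_le hP2_le hP2_nonneg (exp_nonneg _)

/-- Tighter upper bound on the success probability of a Neyman–Scott clustered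
network under Rayleigh fading:
`P₁·P₂ ≤ P_p(λ_p c̄ (1-e^{-c̄β̂})/(c̄β̂)) · [1 - (1-e^{-c̄β̂}) κ/β̂]`. -/
theorem stmt_4
    (g f : E2 → ℝ) (T R lamp cbar : ℝ)
    (hT : 0 < T) (hR : 0 < R) (hlamp : 0 < lamp) (hcbar : 0 < cbar)
    (hg_pos : ∀ x : E2, x ≠ 0 → 0 < g x)
    (hg_cont : ContinuousOn g {(0 : E2)}ᶜ)
    (hg_mono : ∀ x y : E2, x ≠ 0 → y ≠ 0 → ‖x‖ ≤ ‖y‖ → g y ≤ g x)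
    (hg_int : ∀ ε : ℝ, 0 < ε → IntegrableOn g (Metric.ball (0 : E2) ε)ᶜ)
    (hf_meas : Measurable f) (hf_nonneg : ∀ x, 0 ≤ f x)
    (hf_prob : ∫ x, f x = 1)
    (hf_iso : ∀ x y : E2, ‖x‖ = ‖y‖ → f x = f y)
    (z : E2) (hz : z = EuclideanSpace.single (0 : Fin 2) R)
    (β : E2 → ℝ)
    (hβ : ∀ y, β y = ∫ x, g (x - y - z) / (g z / T + g (x - y - z)) * f x)
    (βI : ℝ) (hβI : βI = ∫ u, g u / (g z / T + g u))
    (hβI_fin : Integrable fun u : E2 => g u / (g z / T + g u))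
    (βhat : ℝ) (hβhat : βhat = ⨆ y : E2, β y) (hβhat_pos : 0 < βhat)
    (κ : ℝ) (hκ : κ = ∫ y, β y * f y)
    (P1 P2 : ℝ)
    (hP1 : P1 = Real.exp (-(lamp * ∫ y, (1 - Real.exp (-(cbar * β y))))))
    (hP2 : P2 = ∫ y, Real.exp (-(cbar * β y)) * f y) :
    P1 * P2 ≤ Real.exp (-(lamp * cbar * (1 - Real.exp (-(cbar * βhat))) / (cbar * βhat) * βI)) *
      (1 - (1 - Real.exp (-(cbar * βhat))) * κ / βhat) :=
  stmt_4_general g f T R lamp cbar hT hR hlamp hcbar hg_pos hf_nonneg hf_prob z hz β hβ βI hβI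
    hβI_fin βhat hβhat hβhat_pos κ hκ P1 P2 hP1 hP2
end

section
/- Assume 0<β_I<∞ and f̂* := sup_{w∈ℝ²} (f*f)(w) < ∞. Then for every ε∈(0,1), the transmission capacity of the Poisson clustered process is lower bounded by that of the Poisson point process: C(ε,T) ≥ C_p(ε,T) = ((1−ε)/β_I)·ln(1/(1−ε)). -/
open MeasureTheory ProbabilityTheory Filter Real
open scoped ProbabilityTheory ENNReal

local notation "E2" => EuclideanSpace ℝ (Fin 2)

/-!
The kernel `u ↦ g(u)/(g(z)/T + g(u))` takes values in `[0, 1]`, so `β`, its average against the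
density `f`, satisfies `0 ≤ β ≤ 1`; and `β` is the convolution of `f` with the reflected kernel,
so `∫ β = β_I`. With `1 - e^{-t} ≤ t` this gives `P₁(c̄, λ) ≥ e^{-λ c̄ β_I}`, while `β ≤ 1` gives
`P₂(c̄) ≥ e^{-c̄}`. Hence for `0 < a < K := ln(1/(1-ε))/β_I` the pair `c̄ = (K - a) β_I`,
`λ = a/c̄` is feasible and has `λ c̄ = a`, so the supremum in `C(ε, T)` is at least `K`.
-/

open scoped Convolution

section Density

variable {α : Type*} [MeasurableSpace α] {μ : Measure α} {f : α → ℝ}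

lemma integral_mul_mem_Icc {k : α → ℝ} (hk : ∀ᵐ x ∂μ, k x ∈ Set.Icc 0 1)
    (hf0 : ∀ x, 0 ≤ f x) (hf : Integrable f μ) :
    ∫ x, k x * f x ∂μ ∈ Set.Icc 0 (∫ x, f x ∂μ) :=
  ⟨integral_nonneg_of_ae (hk.mono fun x hx => mul_nonneg hx.1 (hf0 x)),
    integral_mono_of_nonneg (hk.mono fun x hx => mul_nonneg hx.1 (hf0 x)) hf
      (hk.mono fun x hx => mul_le_of_le_one_left (hf0 x) hx.2)⟩

lemma integral_one_sub_exp_neg_mul_le {β : α → ℝ} (hβ : Integrable β μ) (hβ0 : ∀ y, 0 ≤ β y)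
    {c : ℝ} (hc : 0 ≤ c) :
    ∫ y, (1 - exp (-(c * β y))) ∂μ ≤ c * ∫ y, β y ∂μ := by
  rw [← integral_const_mul]
  refine integral_mono_of_nonneg (Eventually.of_forall fun y => ?_) (hβ.const_mul c)
    (Eventually.of_forall fun y => ?_)
  · exact sub_nonneg.mpr (exp_le_one_iff.mpr (by nlinarith [hβ0 y]))
  · linarith [add_one_le_exp (-(c * β y))]

lemma exp_neg_le_integral_exp_neg_mul_mul {β : α → ℝ} (hβ : AEStronglyMeasurable β μ)
    (hβ01 : ∀ y, β y ∈ Set.Icc 0 1) {c : ℝ} (hc : 0 ≤ c) (hf0 : ∀ x, 0 ≤ f x)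
    (hf : Integrable f μ) (hf1 : ∫ x, f x ∂μ = 1) :
    exp (-c) ≤ ∫ y, exp (-(c * β y)) * f y ∂μ := by
  have hexp_le_one : ∀ y, exp (-(c * β y)) ≤ 1 := fun y =>
    exp_le_one_iff.mpr (by nlinarith [(hβ01 y).1])
  have hint : Integrable (fun y => exp (-(c * β y)) * f y) μ :=
    hf.bdd_mul (continuous_exp.comp_aestronglyMeasurable (hβ.const_mul c).neg)
      (Eventually.of_forall fun y => by
        rw [norm_of_nonneg (exp_pos _).le]; exact hexp_le_one y)
  calc exp (-c) = ∫ y, exp (-c) * f y ∂μ := by rw [integral_const_mul, hf1, mul_one]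
    _ ≤ ∫ y, exp (-(c * β y)) * f y ∂μ :=
      integral_mono (hf.const_mul _) hint fun y =>
        mul_le_mul_of_nonneg_right (exp_le_exp.mpr (by nlinarith [(hβ01 y).2])) (hf0 y)

end Density

section Convolution

variable {G : Type*} [AddCommGroup G] [MeasurableSpace G] {μ : Measure G} {ρ f : G → ℝ}

lemma integral_sub_mul_eq_convolution (y : G) :
    ∫ x, ρ (x - y) * f x ∂μ = (f ⋆[ContinuousLinearMap.mul ℝ ℝ, μ] fun u => ρ (-u)) y := by
  simp only [convolution_def, ContinuousLinearMap.mul_apply', neg_sub, mul_comm]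

lemma integral_sub_mul_mem_Icc [MeasurableAdd G] [μ.IsAddRightInvariant]
    (hρ : ∀ᵐ u ∂μ, ρ u ∈ Set.Icc 0 1) (hf0 : ∀ x, 0 ≤ f x) (hf : Integrable f μ) (y : G) :
    ∫ x, ρ (x - y) * f x ∂μ ∈ Set.Icc 0 (∫ x, f x ∂μ) :=
  integral_mul_mem_Icc ((measurePreserving_sub_right μ y).quasiMeasurePreserving.ae hρ) hf0 hf

variable [MeasurableAdd₂ G] [MeasurableNeg G] [SFinite μ] [μ.IsAddRightInvariant]
  [μ.IsNegInvariant]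

lemma MeasureTheory.Integrable.integrable_integral_sub_mul (hρ : Integrable ρ μ)
    (hf : Integrable f μ) :
    Integrable (fun y => ∫ x, ρ (x - y) * f x ∂μ) μ := by
  simp_rw [integral_sub_mul_eq_convolution]
  exact hf.integrable_convolution _ hρ.comp_neg

lemma integral_integral_sub_mul (hρ : Integrable ρ μ) (hf : Integrable f μ) :
    ∫ y, ∫ x, ρ (x - y) * f x ∂μ ∂μ = (∫ u, ρ u ∂μ) * ∫ x, f x ∂μ := by
  simp_rw [integral_sub_mul_eq_convolution]
  rw [integral_convolution _ hf hρ.comp_neg, integral_neg_eq_self, ContinuousLinearMap.mul_apply',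
    mul_comm]

end Convolution

lemma ofReal_log_inv_div_le_iSup {P₁ : ℝ → ℝ → ℝ} {P₂ : ℝ → ℝ} {b q : ℝ} (hb : 0 < b)
    (hq : 0 < q) (hP₁ : ∀ c l, 0 < c → 0 < l → exp (-(l * (c * b))) ≤ P₁ c l)
    (hP₂ : ∀ c, 0 < c → exp (-c) ≤ P₂ c) :
    ENNReal.ofReal (log (1 / q) / b) ≤
      ⨆ (p : ℝ × ℝ) (_ : 0 < p.1 ∧ 0 < p.2 ∧ q ≤ P₁ p.2 p.1 * P₂ p.2),
        ENNReal.ofReal (p.1 * p.2) := by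
  set K := log (1 / q) / b
  refine ENNReal.le_of_forall_pos_nnreal_lt fun a ha haK => ?_
  rw [← ENNReal.ofReal_coe_nnreal] at haK ⊢
  have haK : (a : ℝ) < K := (ENNReal.ofReal_lt_ofReal_iff_of_nonneg a.2).mp haK
  set c := (K - a) * b
  have hc : 0 < c := mul_pos (by linarith) hb
  have hlc : a / c * c = a := div_mul_cancel₀ _ hc.ne'
  have hfeasible : q ≤ P₁ c (a / c) * P₂ c := by
    have hq_eq : exp (-(a / c * (c * b))) * exp (-c) = q := by
      rw [← exp_add, ← mul_assoc, hlc,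
        show -(a * b) + -c = -(K * b) by ring, div_mul_cancel₀ _ hb.ne', one_div, log_inv,
        neg_neg, exp_log hq]
    rw [← hq_eq]
    exact mul_le_mul (hP₁ c _ hc (div_pos ha hc)) (hP₂ c hc) (exp_pos _).le
      ((exp_pos _).le.trans (hP₁ c _ hc (div_pos ha hc)))
  refine le_iSup₂_of_le (a / c, c) ⟨div_pos ha hc, hc, hfeasible⟩ ?_
  rw [hlc]

theorem stmt_8_general
    (g f : E2 → ℝ) (T R ε : ℝ)
    (hT : 0 < T) (hR : 0 < R) (hε1 : ε < 1)
    (hg_pos : ∀ x : E2, x ≠ 0 → 0 < g x)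
    (hf_nonneg : ∀ x, 0 ≤ f x)
    (hf_prob : ∫ x, f x = 1)
    (z : E2) (hz : z = EuclideanSpace.single (0 : Fin 2) R)
    (β : E2 → ℝ)
    (hβ : ∀ y, β y = ∫ x, g (x - y - z) / (g z / T + g (x - y - z)) * f x)
    (βI : ℝ) (hβI : βI = ∫ u, g u / (g z / T + g u))
    (hβI_fin : Integrable fun u : E2 => g u / (g z / T + g u))
    (hβI_pos : 0 < βI)
    (P1 : ℝ → ℝ → ℝ) (P2 : ℝ → ℝ)
    (hP1 : ∀ cbar lamp, P1 cbar lamp =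
      Real.exp (-(lamp * ∫ y, (1 - Real.exp (-(cbar * β y))))))
    (hP2 : ∀ cbar, P2 cbar = ∫ y, Real.exp (-(cbar * β y)) * f y)
    (C : ℝ≥0∞)
    (hC : C = ENNReal.ofReal (1 - ε) *
      ⨆ (p : ℝ × ℝ) (_ : 0 < p.1 ∧ 0 < p.2 ∧ 1 - ε ≤ P1 p.2 p.1 * P2 p.2),
        ENNReal.ofReal (p.1 * p.2)) :
    ENNReal.ofReal ((1 - ε) / βI * Real.log (1 / (1 - ε))) ≤ C := by
  have hz0 : z ≠ 0 := by simpa [hz] using hR.ne'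
  have hgz : 0 < g z / T := div_pos (hg_pos z hz0) hT
  set ρ : E2 → ℝ := fun u => g (u - z) / (g z / T + g (u - z))
  have hρ_int : Integrable ρ := hβI_fin.comp_sub_right z
  have hρ_mem : ∀ᵐ u : E2, ρ u ∈ Set.Icc 0 1 := (Measure.ae_ne volume z).mono fun u hu => by
    have hg := hg_pos (u - z) (sub_ne_zero.mpr hu)
    exact ⟨by positivity, (div_le_one (by positivity)).mpr (by linarith)⟩
  have hf : Integrable f := .of_integral_ne_zero (by simp [hf_prob])
  have hβ_eq : β = fun y => ∫ x, ρ (x - y) * f x := funext hβ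
  have hβ_mem : ∀ y, β y ∈ Set.Icc 0 1 := fun y =>
    hβ_eq ▸ hf_prob ▸ integral_sub_mul_mem_Icc hρ_mem hf_nonneg hf y
  have hβ_int : Integrable β := hβ_eq ▸ hρ_int.integrable_integral_sub_mul hf
  have hβ_total : ∫ y, β y = βI := by
    rw [hβ_eq, integral_integral_sub_mul hρ_int hf,
      integral_sub_right_eq_self (fun u => g u / (g z / T + g u)), hf_prob, mul_one, hβI]
  rw [hC, show (1 - ε) / βI * log (1 / (1 - ε)) = (1 - ε) * (log (1 / (1 - ε)) / βI) by ring,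
    ENNReal.ofReal_mul (by linarith)]
  gcongr
  refine ofReal_log_inv_div_le_iSup hβI_pos (by linarith) (fun c l hc hl => ?_) fun c hc => ?_
  · rw [hP1, ← hβ_total]
    gcongr
    exact integral_one_sub_exp_neg_mul_le hβ_int (fun y => (hβ_mem y).1) hc.le
  · rw [hP2]
    exact exp_neg_le_integral_exp_neg_mul_mul hβ_int.aestronglyMeasurable hβ_mem hc.le hf_nonneg
      hf hf_prob

/-- The transmission capacity of the Poisson clustered network is lower bounded by
that of the Poisson network: `C(ε,T) ≥ C_p(ε,T) = ((1-ε)/β_I)·ln(1/(1-ε))`. -/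
theorem stmt_8
    (g f : E2 → ℝ) (T R ε : ℝ)
    (hT : 0 < T) (hR : 0 < R) (hε : 0 < ε) (hε1 : ε < 1)
    (hg_pos : ∀ x : E2, x ≠ 0 → 0 < g x)
    (hg_cont : ContinuousOn g {(0 : E2)}ᶜ)
    (hg_mono : ∀ x y : E2, x ≠ 0 → y ≠ 0 → ‖x‖ ≤ ‖y‖ → g y ≤ g x)
    (hg_int : ∀ δ : ℝ, 0 < δ → IntegrableOn g (Metric.ball (0 : E2) δ)ᶜ)
    (hf_meas : Measurable f) (hf_nonneg : ∀ x, 0 ≤ f x)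
    (hf_prob : ∫ x, f x = 1)
    (hf_iso : ∀ x y : E2, ‖x‖ = ‖y‖ → f x = f y)
    (z : E2) (hz : z = EuclideanSpace.single (0 : Fin 2) R)
    (β : E2 → ℝ)
    (hβ : ∀ y, β y = ∫ x, g (x - y - z) / (g z / T + g (x - y - z)) * f x)
    (βI : ℝ) (hβI : βI = ∫ u, g u / (g z / T + g u))
    (hβI_fin : Integrable fun u : E2 => g u / (g z / T + g u))
    (hβI_pos : 0 < βI)
    (hfstar_bdd : BddAbove (Set.range fun w : E2 => ∫ u, f u * f (w - u)))
    (P1 : ℝ → ℝ → ℝ) (P2 : ℝ → ℝ)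
    (hP1 : ∀ cbar lamp, P1 cbar lamp =
      Real.exp (-(lamp * ∫ y, (1 - Real.exp (-(cbar * β y))))))
    (hP2 : ∀ cbar, P2 cbar = ∫ y, Real.exp (-(cbar * β y)) * f y)
    (C : ℝ≥0∞)
    (hC : C = ENNReal.ofReal (1 - ε) *
      ⨆ (p : ℝ × ℝ) (_ : 0 < p.1 ∧ 0 < p.2 ∧ 1 - ε ≤ P1 p.2 p.1 * P2 p.2),
        ENNReal.ofReal (p.1 * p.2)) :
    ENNReal.ofReal ((1 - ε) / βI * Real.log (1 / (1 - ε))) ≤ C :=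
  stmt_8_general g f T R ε hT hR hε1 hg_pos hf_nonneg hf_prob z hz β hβ βI hβI hβI_fin hβI_pos P1 P2
    hP1 hP2 C hC
end

section
/- Fix λ_p>0 and assume 0<β_I<∞, β̂ := sup_{y∈ℝ²} β(y) ≤ 1, and f̂* := sup_{w∈ℝ²}(f*f)(w) < ∞. Let C*(ε,T) = λ_p(1−ε)·sup{c̄>0 : P₁(c̄,λ_p)P₂(c̄) ≥ 1−ε} be the constrained transmission capacity and C_p(ε,T)=((1−ε)/β_I)ln(1/(1−ε)). Then for every ε∈(0,1): (i) C*(ε,T) ≥ λ_p C_p(ε,T)/(λ_p+f̂*); and (ii) if moreover λ_p β_I > β̂ ln(1/(1−ε)), then C*(ε,T) ≤ λ_p C_p(ε,T)/(λ_p − (β̂/β_I)ln(1/(1−ε))). -/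
open MeasureTheory ProbabilityTheory Filter Real
open scoped ProbabilityTheory ENNReal

local notation "E2" => EuclideanSpace ℝ (Fin 2)

private lemma exp_chord (t S : ℝ) (ht0 : 0 ≤ t) (ht1 : t ≤ 1) :
    Real.exp (-(t * S)) ≤ 1 - t + t * Real.exp (-S) := by
  have h := convexOn_exp.2 (Set.mem_univ (0 : ℝ)) (Set.mem_univ (-S))
    (by linarith : (0:ℝ) ≤ 1 - t) ht0 (by ring)
  simp only [smul_eq_mul, mul_zero, zero_add, mul_neg, Real.exp_zero, mul_one] at h
  calc Real.exp (-(t * S)) = Real.exp ((1 - t) * 0 + t * (-S)) := by ring_nf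
    _ ≤ (1 - t) * 1 + t * Real.exp (-S) := by
        have := convexOn_exp.2 (Set.mem_univ (0 : ℝ)) (Set.mem_univ (-S))
          (by linarith : (0:ℝ) ≤ 1 - t) ht0 (by ring)
        simpa [smul_eq_mul, Real.exp_zero] using this
    _ = 1 - t + t * Real.exp (-S) := by ring

set_option maxHeartbeats 3200000 in
/-- Bounds on the constrained transmission capacity `C*(ε,T)` (parent intensity
`λ_p` fixed, optimizing over the mean cluster size `c̄`):
`λ_p C_p/(λ_p+f̂*) ≤ C*(ε,T)`, and if `λ_p β_I > β̂ ln(1/(1-ε))` then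
`C*(ε,T) ≤ λ_p C_p/(λ_p - (β̂/β_I) ln(1/(1-ε)))`. -/
theorem stmt_10
    (g f : E2 → ℝ) (T R ε lamp : ℝ)
    (hT : 0 < T) (hR : 0 < R) (hε : 0 < ε) (hε1 : ε < 1) (hlamp : 0 < lamp)
    (hg_pos : ∀ x : E2, x ≠ 0 → 0 < g x)
    (hg_cont : ContinuousOn g {(0 : E2)}ᶜ)
    (hg_mono : ∀ x y : E2, x ≠ 0 → y ≠ 0 → ‖x‖ ≤ ‖y‖ → g y ≤ g x)
    (hg_int : ∀ δ : ℝ, 0 < δ → IntegrableOn g (Metric.ball (0 : E2) δ)ᶜ)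
    (hf_meas : Measurable f) (hf_nonneg : ∀ x, 0 ≤ f x)
    (hf_prob : ∫ x, f x = 1)
    (hf_iso : ∀ x y : E2, ‖x‖ = ‖y‖ → f x = f y)
    (z : E2) (hz : z = EuclideanSpace.single (0 : Fin 2) R)
    (β : E2 → ℝ)
    (hβ : ∀ y, β y = ∫ x, g (x - y - z) / (g z / T + g (x - y - z)) * f x)
    (βI : ℝ) (hβI : βI = ∫ u, g u / (g z / T + g u))
    (hβI_fin : Integrable fun u : E2 => g u / (g z / T + g u))
    (hβI_pos : 0 < βI)
    (βhat : ℝ) (hβhat : βhat = ⨆ y : E2, β y) (hβhat_le : βhat ≤ 1)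
    (fstar : ℝ) (hfstar : fstar = ⨆ w : E2, ∫ u, f u * f (w - u))
    (hfstar_bdd : BddAbove (Set.range fun w : E2 => ∫ u, f u * f (w - u)))
    (P1 : ℝ → ℝ) (P2 : ℝ → ℝ)
    (hP1 : ∀ cbar, P1 cbar =
      Real.exp (-(lamp * ∫ y, (1 - Real.exp (-(cbar * β y))))))
    (hP2 : ∀ cbar, P2 cbar = ∫ y, Real.exp (-(cbar * β y)) * f y)
    (Cstar : ℝ≥0∞)
    (hCstar : Cstar = ENNReal.ofReal (lamp * (1 - ε)) *
      ⨆ (c : ℝ) (_ : 0 < c ∧ 1 - ε ≤ P1 c * P2 c), ENNReal.ofReal c)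
    (Cp : ℝ) (hCp : Cp = (1 - ε) / βI * Real.log (1 / (1 - ε))) :
    ENNReal.ofReal (lamp * Cp / (lamp + fstar)) ≤ Cstar ∧
      (βhat * Real.log (1 / (1 - ε)) < lamp * βI →
        Cstar ≤ ENNReal.ofReal (lamp * Cp / (lamp - βhat / βI * Real.log (1 / (1 - ε))))) := by
  have hε' : (0:ℝ) < 1 - ε := by linarith
  -- f is integrable
  have hf_int : Integrable f := by
    by_contra h
    rw [integral_undef h] at hf_prob
    norm_num at hf_prob
  -- basic positivity
  have hz0 : z ≠ 0 := by
    rw [hz]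
    intro h
    have : ‖EuclideanSpace.single (0 : Fin 2) R‖ = 0 := by rw [h, norm_zero]
    rw [EuclideanSpace.norm_single] at this
    rw [Real.norm_eq_abs, abs_of_pos hR] at this
    exact hR.ne' this
  have hgz : 0 < g z := hg_pos z hz0
  set k : E2 → ℝ := fun u => g u / (g z / T + g u) with hk_def
  have hk01 : ∀ u : E2, u ≠ 0 → 0 ≤ k u ∧ k u ≤ 1 := by
    intro u hu
    have hgu : 0 < g u := hg_pos u hu
    have hden : 0 < g z / T + g u := by positivity
    constructor
    · exact div_nonneg hgu.le hden.le
    · rw [div_le_one hden]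
      have : 0 < g z / T := by positivity
      linarith
  have hae01 : ∀ᵐ u : E2, 0 ≤ k u ∧ k u ≤ 1 := by
    have h0 : (volume : Measure E2) {(0 : E2)} = 0 := measure_singleton 0
    filter_upwards [compl_mem_ae_iff.2 h0] with u hu
    exact hk01 u hu
  -- measurable version of k with values in [0,1]
  have hkm : AEMeasurable k (volume : Measure E2) := hβI_fin.aemeasurable
  set k₂ : E2 → ℝ := fun u => max 0 (min 1 (hkm.mk k u)) with hk₂_def
  have hk₂_meas : Measurable k₂ :=
    measurable_const.max (measurable_const.min hkm.measurable_mk)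
  have hk₂_ae : k =ᶠ[ae volume] k₂ := by
    filter_upwards [hkm.ae_eq_mk, hae01] with u h1 h2
    simp only [hk₂_def, ← h1]
    rw [min_eq_right h2.2, max_eq_right h2.1]
  have hk₂_nonneg : ∀ u, 0 ≤ k₂ u := fun u => le_max_left _ _
  have hk₂_le_one : ∀ u, k₂ u ≤ 1 := fun u => max_le (by norm_num) (min_le_left _ _)
  have hk₂_int : Integrable k₂ := hβI_fin.congr hk₂_ae
  have hβI₂ : βI = ∫ u, k₂ u := by rw [hβI]; exact integral_congr_ae hk₂_ae
  -- β in terms of k₂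
  have hβ₂ : ∀ y : E2, β y = ∫ x, k₂ (x - y - z) * f x := by
    intro y
    rw [hβ y]
    apply integral_congr_ae
    have hmp : MeasurePreserving (fun x : E2 => x - (y + z)) volume volume :=
      measurePreserving_sub_right volume (y + z)
    have := hmp.quasiMeasurePreserving.ae_eq_comp hk₂_ae
    filter_upwards [this] with x hx
    have hx' : k (x - (y + z)) = k₂ (x - (y + z)) := hx
    show k (x - y - z) * f x = k₂ (x - y - z) * f x
    rw [show x - y - z = x - (y + z) from sub_sub x y z, hx']
  -- sections are integrable
  have hsec_meas : ∀ y : E2, Measurable fun x : E2 => k₂ (x - y - z) * f x := by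
    intro y
    exact (hk₂_meas.comp ((measurable_id.sub measurable_const).sub measurable_const)).mul hf_meas
  have hsec_int : ∀ y : E2, Integrable fun x : E2 => k₂ (x - y - z) * f x := by
    intro y
    refine hf_int.mono (hsec_meas y).aestronglyMeasurable (ae_of_all _ fun x => ?_)
    rw [Real.norm_eq_abs, Real.norm_eq_abs, abs_of_nonneg (mul_nonneg (hk₂_nonneg _) (hf_nonneg x)),
      abs_of_nonneg (hf_nonneg x)]
    exact mul_le_of_le_one_left (hf_nonneg x) (hk₂_le_one _)
  -- bounds on β
  have hβ_nonneg : ∀ y, 0 ≤ β y := by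
    intro y
    rw [hβ₂ y]
    exact integral_nonneg fun x => mul_nonneg (hk₂_nonneg _) (hf_nonneg x)
  have hβ_le_one : ∀ y, β y ≤ 1 := by
    intro y
    rw [hβ₂ y, ← hf_prob]
    refine integral_mono (hsec_int y) hf_int fun x => ?_
    exact mul_le_of_le_one_left (hf_nonneg x) (hk₂_le_one _)
  -- measurability of β
  have hβ_meas : Measurable β := by
    have hFm : StronglyMeasurable (Function.uncurry fun (y : E2) (x : E2) => k₂ (x - y - z) * f x) := by
      apply Measurable.stronglyMeasurable
      exact (hk₂_meas.comp ((measurable_snd.sub measurable_fst).sub measurable_const)).mul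
        (hf_meas.comp measurable_snd)
    have heq : β = fun y => ∫ x, k₂ (x - y - z) * f x := funext hβ₂
    rw [heq]
    exact (StronglyMeasurable.integral_prod_right (ν := volume) hFm).measurable
  -- Fubini: Integrable on product
  set F : E2 × E2 → ℝ := fun p => k₂ (p.1 - p.2 - z) * f p.1 with hF_def
  have hF_meas : Measurable F :=
    (hk₂_meas.comp ((measurable_fst.sub measurable_snd).sub measurable_const)).mul
      (hf_meas.comp measurable_fst)
  have hF_int : Integrable F ((volume : Measure E2).prod volume) := by
    rw [integrable_prod_iff hF_meas.aestronglyMeasurable]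
    constructor
    · refine ae_of_all _ fun x => ?_
      have : (fun y : E2 => k₂ (x - y - z) * f x) = fun y => k₂ ((x - z) - y) * f x := by
        funext y; rw [sub_right_comm]
      rw [show (fun y : E2 => F (x, y)) = fun y => k₂ ((x - z) - y) * f x by
        funext y; simp only [hF_def]; rw [sub_right_comm]]
      exact (hk₂_int.comp_sub_left (x - z)).mul_const (f x)
    · have hval : ∀ x : E2, (∫ y, ‖F (x, y)‖) = βI * f x := by
        intro x
        have h1 : ∀ y : E2, ‖F (x, y)‖ = k₂ ((x - z) - y) * f x := by
          intro y
          simp only [hF_def, Real.norm_eq_abs]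
          rw [abs_of_nonneg (mul_nonneg (hk₂_nonneg _) (hf_nonneg x)), sub_right_comm]
        simp only [h1]
        rw [integral_mul_const, integral_sub_left_eq_self k₂ volume (x - z), ← hβI₂]
      rw [show (fun x : E2 => ∫ y, ‖F (x, y)‖) = fun x => βI * f x from funext hval]
      exact hf_int.const_mul βI
  have hβ_int : Integrable β := by
    have := hF_int.integral_prod_right
    refine this.congr (ae_of_all _ fun y => ?_)
    rw [hβ₂ y]
  have hβ_tot : ∫ y, β y = βI := by
    have hswap := integral_integral_swap (f := fun (x y : E2) => F (x, y)) hF_int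
    have hRR : (∫ y, ∫ x, F (x, y)) = ∫ y, β y := by
      refine integral_congr_ae (ae_of_all _ fun y => ?_)
      simp only [hF_def]
      exact (hβ₂ y).symm
    have hLL : (∫ x, ∫ y, F (x, y)) = βI := by
      have hinner : ∀ x : E2, (∫ y, F (x, y)) = βI * f x := by
        intro x
        simp only [hF_def]
        have he : (fun y : E2 => k₂ (x - y - z) * f x) = fun y => k₂ ((x - z) - y) * f x := by
          funext y; rw [sub_right_comm]
        rw [he, integral_mul_const, integral_sub_left_eq_self k₂ volume (x - z), ← hβI₂]
      rw [show (fun x : E2 => ∫ y, F (x, y)) = fun x => βI * f x from funext hinner]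
      rw [integral_const_mul, hf_prob, mul_one]
    rw [← hRR, ← hswap, hLL]
  -- convolution facts
  have hconv_le : ∀ w : E2, (∫ u, f u * f (w - u)) ≤ fstar := fun w =>
    hfstar ▸ le_ciSup hfstar_bdd w
  have hfstar0 : 0 ≤ fstar :=
    le_trans (integral_nonneg fun u => mul_nonneg (hf_nonneg u) (hf_nonneg _)) (hconv_le 0)
  -- β·f integrable
  have hβf_int : Integrable fun y => β y * f y :=
    hf_int.bdd_mul hβ_meas.aestronglyMeasurable
      (c := 1) (ae_of_all _ fun y => by
        rw [Real.norm_eq_abs, abs_of_nonneg (hβ_nonneg y)]; exact hβ_le_one y)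
  set M := ∫ y, β y * f y with hM_def
  have hM0 : 0 ≤ M := integral_nonneg fun y => mul_nonneg (hβ_nonneg y) (hf_nonneg y)
  -- the key convolution bound : M ≤ fstar * βI
  have hlf1 : (∫⁻ x, ENNReal.ofReal (f x)) = 1 := by
    rw [← ofReal_integral_eq_lintegral_ofReal hf_int (ae_of_all _ hf_nonneg), hf_prob,
      ENNReal.ofReal_one]
  set Q : E2 → ℝ≥0∞ := fun w => ∫⁻ y, ENNReal.ofReal (f y) * ENNReal.ofReal (f (w - y))
    with hQ_def
  have hΨmeas : Measurable (Function.uncurry fun (w y : E2) =>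
      ENNReal.ofReal (f y) * ENNReal.ofReal (f (w - y))) :=
    ((hf_meas.comp measurable_snd).ennreal_ofReal).mul
      ((hf_meas.comp (measurable_fst.sub measurable_snd)).ennreal_ofReal)
  have hQmeas : Measurable Q := by
    rw [hQ_def]
    exact Measurable.lintegral_prod_right (f := fun (w y : E2) =>
      ENNReal.ofReal (f y) * ENNReal.ofReal (f (w - y))) hΨmeas
  have hQtot : (∫⁻ w, Q w) = 1 := by
    have hswap := lintegral_lintegral_swap (μ := (volume : Measure E2)) (ν := volume)
      (f := fun (w y : E2) => ENNReal.ofReal (f y) * ENNReal.ofReal (f (w - y)))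
      hΨmeas.aemeasurable
    calc (∫⁻ w, Q w)
        = ∫⁻ y, ∫⁻ w, ENNReal.ofReal (f y) * ENNReal.ofReal (f (w - y)) := hswap
      _ = ∫⁻ y, ENNReal.ofReal (f y) * ∫⁻ w, ENNReal.ofReal (f (w - y)) := by
          refine lintegral_congr fun y => lintegral_const_mul _
            ((hf_meas.comp (measurable_id.sub measurable_const)).ennreal_ofReal)
      _ = ∫⁻ y, ENNReal.ofReal (f y) * 1 := by
          refine lintegral_congr fun y => ?_
          rw [lintegral_sub_right_eq_self (fun w => ENNReal.ofReal (f w)) y, hlf1]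
      _ = 1 := by simp only [mul_one]; exact hlf1
  have hQle : ∀ᵐ w : E2, Q w ≤ ENNReal.ofReal fstar := by
    filter_upwards [ae_lt_top hQmeas (by rw [hQtot]; exact ENNReal.one_ne_top)] with w hw
    have hmeasw : Measurable fun y : E2 => f y * f (w - y) :=
      hf_meas.mul (hf_meas.comp (measurable_const.sub measurable_id))
    have hnn : 0 ≤ᶠ[ae (volume : Measure E2)] fun y : E2 => f y * f (w - y) :=
      ae_of_all _ fun y => mul_nonneg (hf_nonneg y) (hf_nonneg _)
    have hQw : Q w = ∫⁻ y, ENNReal.ofReal (f y * f (w - y)) :=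
      lintegral_congr fun y => (ENNReal.ofReal_mul (hf_nonneg y)).symm
    have hint : Integrable fun y : E2 => f y * f (w - y) :=
      ⟨hmeasw.aestronglyMeasurable,
       (hasFiniteIntegral_iff_ofReal hnn).2 (by rw [← hQw]; exact hw)⟩
    have heq2 : ENNReal.ofReal (∫ y, f y * f (w - y)) = Q w := by
      rw [ofReal_integral_eq_lintegral_ofReal hint hnn, hQw]
    rw [← heq2]
    exact ENNReal.ofReal_le_ofReal (hconv_le w)
  have hβ_alt : ∀ y : E2, β y = ∫ u, k₂ u * f (u + (y + z)) := by
    intro y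
    have htrans := integral_add_right_eq_self (μ := (volume : Measure E2))
      (fun x => k₂ (x - y - z) * f x) (y + z)
    rw [hβ₂ y, ← htrans]
    refine integral_congr_ae (ae_of_all _ fun u => ?_)
    show k₂ (u + (y + z) - y - z) * f (u + (y + z)) = k₂ u * f (u + (y + z))
    rw [show u + (y + z) - y - z = u from by abel]
  have halt_int : ∀ y : E2, Integrable fun u : E2 => k₂ u * f (u + (y + z)) := by
    intro y
    refine ((hsec_int y).comp_add_right (y + z)).congr (ae_of_all _ fun u => ?_)
    show k₂ (u + (y + z) - y - z) * f (u + (y + z)) = k₂ u * f (u + (y + z))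
    rw [show u + (y + z) - y - z = u from by abel]
  have hM_le : M ≤ fstar * βI := by
    have h1 : ENNReal.ofReal M = ∫⁻ y, ENNReal.ofReal (β y * f y) :=
      ofReal_integral_eq_lintegral_ofReal hβf_int
        (ae_of_all _ fun y => mul_nonneg (hβ_nonneg y) (hf_nonneg y))
    have h2 : ∀ y : E2, ENNReal.ofReal (β y) =
        ∫⁻ u, ENNReal.ofReal (k₂ u) * ENNReal.ofReal (f (u + (y + z))) := by
      intro y
      rw [hβ_alt y, ofReal_integral_eq_lintegral_ofReal (halt_int y)
        (ae_of_all _ fun u => mul_nonneg (hk₂_nonneg u) (hf_nonneg _))]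
      exact lintegral_congr fun u => ENNReal.ofReal_mul (hk₂_nonneg u)
    have meas_inner : ∀ y : E2, Measurable fun u : E2 =>
        ENNReal.ofReal (k₂ u) * ENNReal.ofReal (f (u + (y + z))) := fun y =>
      (hk₂_meas.ennreal_ofReal).mul
        ((hf_meas.comp (measurable_id.add measurable_const)).ennreal_ofReal)
    have meas_inner2 : ∀ u : E2, Measurable fun y : E2 =>
        ENNReal.ofReal (f y) * ENNReal.ofReal (f (u + (y + z))) := fun u =>
      (hf_meas.ennreal_ofReal).mul
        ((hf_meas.comp (measurable_const.add (measurable_id.add measurable_const))).ennreal_ofReal)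
    have hΦmeas : Measurable (Function.uncurry fun (y u : E2) =>
        ENNReal.ofReal (f y) * (ENNReal.ofReal (k₂ u) * ENNReal.ofReal (f (u + (y + z))))) :=
      ((hf_meas.comp measurable_fst).ennreal_ofReal).mul
        (((hk₂_meas.comp measurable_snd).ennreal_ofReal).mul
          ((hf_meas.comp (measurable_snd.add (measurable_fst.add measurable_const))).ennreal_ofReal))
    have h3 : ENNReal.ofReal M = ∫⁻ y, ∫⁻ u,
        ENNReal.ofReal (f y) * (ENNReal.ofReal (k₂ u) * ENNReal.ofReal (f (u + (y + z)))) := by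
      rw [h1]
      refine lintegral_congr fun y => ?_
      rw [ENNReal.ofReal_mul (hβ_nonneg y), h2 y,
        ← lintegral_mul_const (ENNReal.ofReal (f y)) (meas_inner y)]
      exact lintegral_congr fun u => by ring
    have h4 := lintegral_lintegral_swap (μ := (volume : Measure E2)) (ν := volume)
      (f := fun (y u : E2) =>
        ENNReal.ofReal (f y) * (ENNReal.ofReal (k₂ u) * ENNReal.ofReal (f (u + (y + z)))))
      hΦmeas.aemeasurable
    have h5 : ∀ u : E2, (∫⁻ y, ENNReal.ofReal (f y) *
        (ENNReal.ofReal (k₂ u) * ENNReal.ofReal (f (u + (y + z))))) =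
        ENNReal.ofReal (k₂ u) * ∫⁻ y, ENNReal.ofReal (f y) * ENNReal.ofReal (f (u + (y + z))) := by
      intro u
      rw [← lintegral_const_mul _ (meas_inner2 u)]
      exact lintegral_congr fun y => by ring
    have h6 : ∀ u : E2, (∫⁻ y, ENNReal.ofReal (f y) * ENNReal.ofReal (f (u + (y + z)))) =
        Q (-(u + z)) := by
      intro u
      rw [hQ_def]
      refine lintegral_congr fun y => ?_
      have : f (u + (y + z)) = f (-(u + z) - y) :=
        hf_iso _ _ (by rw [show -(u + z) - y = -(u + (y + z)) from by abel, norm_neg])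
      rw [this]
    have hQle_u : ∀ᵐ u : E2, Q (-(u + z)) ≤ ENNReal.ofReal fstar := by
      have hmp : MeasurePreserving (fun u : E2 => -(u + z)) volume volume :=
        (Measure.measurePreserving_neg volume).comp (measurePreserving_add_right volume z)
      exact hmp.quasiMeasurePreserving.ae hQle
    have h7 : ENNReal.ofReal M ≤ ENNReal.ofReal fstar * ENNReal.ofReal βI := by
      calc ENNReal.ofReal M = ∫⁻ u, ENNReal.ofReal (k₂ u) * Q (-(u + z)) := by
            rw [h3, h4]
            exact lintegral_congr fun u => by rw [h5 u, h6 u]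
        _ ≤ ∫⁻ u, ENNReal.ofReal (k₂ u) * ENNReal.ofReal fstar :=
            lintegral_mono_ae (hQle_u.mono fun u hu => mul_le_mul_right hu _)
        _ = (∫⁻ u, ENNReal.ofReal (k₂ u)) * ENNReal.ofReal fstar :=
            lintegral_mul_const _ hk₂_meas.ennreal_ofReal
        _ = ENNReal.ofReal βI * ENNReal.ofReal fstar := by
            rw [← ofReal_integral_eq_lintegral_ofReal hk₂_int (ae_of_all _ hk₂_nonneg), ← hβI₂]
        _ = ENNReal.ofReal fstar * ENNReal.ofReal βI := mul_comm _ _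
    have h8 : ENNReal.ofReal M ≤ ENNReal.ofReal (fstar * βI) := by
      rw [ENNReal.ofReal_mul hfstar0]; exact h7
    exact (ENNReal.ofReal_le_ofReal_iff (mul_nonneg hfstar0 hβI_pos.le)).1 h8
  -- analytic estimates on P1 and P2
  have hexp_meas : ∀ c : ℝ, Measurable fun y : E2 => Real.exp (-(c * β y)) := fun c =>
    ((hβ_meas.const_mul c).neg).exp
  have hexp_int : ∀ c : ℝ, Integrable fun y : E2 => Real.exp (-(c * β y)) * f y := by
    intro c
    refine hf_int.bdd_mul (hexp_meas c).aestronglyMeasurable (c := Real.exp |c|) (ae_of_all _ fun y => ?_)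
    rw [Real.norm_eq_abs, abs_of_pos (Real.exp_pos _)]
    apply Real.exp_le_exp.2
    have h1 : |c| * |β y| ≤ |c| * 1 := by
      refine mul_le_mul_of_nonneg_left ?_ (abs_nonneg c)
      rw [abs_of_nonneg (hβ_nonneg y)]; exact hβ_le_one y
    calc -(c * β y) ≤ |c * β y| := neg_le_abs _
      _ = |c| * |β y| := abs_mul c (β y)
      _ ≤ |c| := by linarith
  have hI1_int : ∀ c : ℝ, 0 ≤ c → Integrable fun y : E2 => 1 - Real.exp (-(c * β y)) := by
    intro c hc
    refine (hβ_int.const_mul c).mono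
      (measurable_const.sub (hexp_meas c)).aestronglyMeasurable (ae_of_all _ fun y => ?_)
    have h1 : 0 ≤ c * β y := mul_nonneg hc (hβ_nonneg y)
    have h2 : Real.exp (-(c * β y)) ≤ 1 := Real.exp_le_one_iff.2 (by linarith)
    have h3 : 1 - Real.exp (-(c * β y)) ≤ c * β y := by
      have := Real.add_one_le_exp (-(c * β y)); linarith
    rw [Real.norm_eq_abs, Real.norm_eq_abs, abs_of_nonneg (by linarith : (0:ℝ) ≤ 1 - Real.exp (-(c * β y))),
      abs_of_nonneg h1]
    exact h3
  have hI1_le : ∀ c : ℝ, 0 ≤ c → (∫ y, 1 - Real.exp (-(c * β y))) ≤ c * βI := by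
    intro c hc
    have := integral_mono (hI1_int c hc) (hβ_int.const_mul c) (fun y => by
      have := Real.add_one_le_exp (-(c * β y)); simp only; linarith)
    rwa [integral_const_mul, hβ_tot] at this
  have hP1_ge : ∀ c : ℝ, 0 ≤ c → Real.exp (-(lamp * (c * βI))) ≤ P1 c := by
    intro c hc
    rw [hP1 c]
    exact Real.exp_le_exp.2 (neg_le_neg (mul_le_mul_of_nonneg_left (hI1_le c hc) hlamp.le))
  have hP2_le_one : ∀ c : ℝ, 0 ≤ c → P2 c ≤ 1 := by
    intro c hc
    rw [hP2 c, ← hf_prob]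
    refine integral_mono (hexp_int c) hf_int fun y => ?_
    exact mul_le_of_le_one_left (hf_nonneg y)
      (Real.exp_le_one_iff.2 (neg_nonpos.2 (mul_nonneg hc (hβ_nonneg y))))
  have hP2_ge : ∀ c : ℝ, 0 ≤ c → Real.exp (-(c * M)) ≤ P2 c := by
    intro c hc
    rw [hP2 c]
    have hrhs_int : Integrable fun y : E2 =>
        Real.exp (-(c * M)) * ((1 + c * M) * f y - c * (β y * f y)) :=
      (((hf_int.const_mul (1 + c * M)).sub (hβf_int.const_mul c)).const_mul _)
    have hrhs_val : (∫ y, Real.exp (-(c * M)) * ((1 + c * M) * f y - c * (β y * f y))) =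
        Real.exp (-(c * M)) := by
      rw [integral_const_mul, integral_sub (hf_int.const_mul _) (hβf_int.const_mul c),
        integral_const_mul, integral_const_mul, hf_prob, ← hM_def]
      ring
    refine le_trans (le_of_eq hrhs_val.symm)
      (integral_mono hrhs_int (hexp_int c) fun y => ?_)
    have key : Real.exp (-(c * M)) * (1 + c * M - c * β y) ≤ Real.exp (-(c * β y)) := by
      have h2 := mul_le_mul_of_nonneg_left (Real.add_one_le_exp (c * M - c * β y))
        (Real.exp_pos (-(c * M))).le
      have h3 : Real.exp (-(c * M)) * Real.exp (c * M - c * β y) = Real.exp (-(c * β y)) := by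
        rw [← Real.exp_add]; ring_nf
      nlinarith [h2, h3]
    calc Real.exp (-(c * M)) * ((1 + c * M) * f y - c * (β y * f y))
        = (Real.exp (-(c * M)) * (1 + c * M - c * β y)) * f y := by ring
      _ ≤ Real.exp (-(c * β y)) * f y := mul_le_mul_of_nonneg_right key (hf_nonneg y)
  -- log quantities
  set L := Real.log (1 / (1 - ε)) with hL_def
  have hLpos : 0 < L := Real.log_pos (one_lt_one_div hε' (by linarith))
  have hexpL : Real.exp (-L) = 1 - ε := by
    rw [hL_def, one_div, Real.log_inv, neg_neg, Real.exp_log hε']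
  constructor
  · -- lower bound
    have hlf : 0 < lamp + fstar := by linarith
    set c₀ := L / (βI * (lamp + fstar)) with hc₀
    have hc₀pos : 0 < c₀ := div_pos hLpos (by positivity)
    have hfeas : 1 - ε ≤ P1 c₀ * P2 c₀ := by
      have h1 := hP1_ge c₀ hc₀pos.le
      have h2 := hP2_ge c₀ hc₀pos.le
      have h3 : Real.exp (-(lamp * (c₀ * βI))) * Real.exp (-(c₀ * M)) ≤ P1 c₀ * P2 c₀ :=
        mul_le_mul h1 h2 (Real.exp_pos _).le (le_trans (Real.exp_pos _).le h1)
      refine le_trans ?_ h3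
      rw [← Real.exp_add, ← hexpL]
      apply Real.exp_le_exp.2
      have hM_le' : c₀ * M ≤ c₀ * (fstar * βI) := mul_le_mul_of_nonneg_left hM_le hc₀pos.le
      have heq : lamp * (c₀ * βI) + c₀ * (fstar * βI) = L := by
        rw [hc₀]; field_simp
      linarith
    rw [hCstar]
    have hle1 : ENNReal.ofReal c₀ ≤
        ⨆ (c : ℝ) (_ : 0 < c ∧ 1 - ε ≤ P1 c * P2 c), ENNReal.ofReal c :=
      le_iSup_of_le c₀ (le_iSup_of_le ⟨hc₀pos, hfeas⟩ le_rfl)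
    calc ENNReal.ofReal (lamp * Cp / (lamp + fstar))
        = ENNReal.ofReal (lamp * (1 - ε)) * ENNReal.ofReal c₀ := by
          rw [← ENNReal.ofReal_mul (by positivity : (0:ℝ) ≤ lamp * (1 - ε))]
          congr 1
          rw [hCp, hc₀]
          field_simp
      _ ≤ _ := mul_le_mul_right hle1 _
  · -- upper bound
    intro hcond
    have hbdd : BddAbove (Set.range β) := ⟨1, by rintro _ ⟨y, rfl⟩; exact hβ_le_one y⟩
    have hβ_le_hat : ∀ y, β y ≤ βhat := fun y => hβhat ▸ le_ciSup hbdd y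
    have hβhat0 : 0 < βhat := by
      by_contra h
      push_neg at h
      have hβ0 : ∀ y : E2, β y = 0 := fun y =>
        le_antisymm (le_trans (hβ_le_hat y) h) (hβ_nonneg y)
      have : βI = 0 := by rw [← hβ_tot]; simp [hβ0]
      exact hβI_pos.ne' this
    have hden : 0 < lamp * βI - βhat * L := by linarith
    set cmax := L / (lamp * βI - βhat * L) with hcmax
    have hstep : ∀ c : ℝ, 0 < c ∧ 1 - ε ≤ P1 c * P2 c → c ≤ cmax := by
      rintro c ⟨hcpos, hcfeas⟩
      have hP1nonneg : 0 ≤ P1 c := by rw [hP1 c]; exact (Real.exp_pos _).le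
      have hP1c : 1 - ε ≤ P1 c := by
        have := mul_le_of_le_one_right hP1nonneg (hP2_le_one c hcpos.le)
        linarith
      have hIle : lamp * (∫ y, 1 - Real.exp (-(c * β y))) ≤ L := by
        rw [hP1 c] at hP1c
        have hlog := Real.log_le_log hε' hP1c
        rw [Real.log_exp] at hlog
        rw [hL_def, one_div, Real.log_inv]
        linarith
      have hg1 : ((1 - Real.exp (-(c * βhat))) / βhat) * βI ≤
          ∫ y, 1 - Real.exp (-(c * β y)) := by
        have pt : ∀ y : E2, ((1 - Real.exp (-(c * βhat))) / βhat) * β y ≤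
            1 - Real.exp (-(c * β y)) := by
          intro y
          have ht0 : 0 ≤ β y / βhat := div_nonneg (hβ_nonneg y) hβhat0.le
          have ht1 : β y / βhat ≤ 1 := (div_le_one hβhat0).2 (hβ_le_hat y)
          have hch := exp_chord (β y / βhat) (c * βhat) ht0 ht1
          have harg : β y / βhat * (c * βhat) = c * β y := by field_simp
          rw [harg] at hch
          have hre : (1 - Real.exp (-(c * βhat))) / βhat * β y =
              β y / βhat - β y / βhat * Real.exp (-(c * βhat)) := by
            field_simp
          rw [hre]
          linarith
        have := integral_mono (hβ_int.const_mul _) (hI1_int c hcpos.le) pt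
        rwa [integral_const_mul, hβ_tot] at this
      set u := βhat * L / (lamp * βI) with hu
      have hlbpos : (0:ℝ) < lamp * βI := by positivity
      have hu1 : u < 1 := (div_lt_one hlbpos).2 hcond
      have hu0 : 0 < u := div_pos (mul_pos hβhat0 hLpos) hlbpos
      have h2 : 1 - Real.exp (-(c * βhat)) ≤ u := by
        have key : lamp * (((1 - Real.exp (-(c * βhat))) / βhat) * βI) ≤ L :=
          le_trans (mul_le_mul_of_nonneg_left hg1 hlamp.le) hIle
        rw [hu, le_div_iff₀ hlbpos]
        have hkey2 := mul_le_mul_of_nonneg_right key hβhat0.le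
        calc (1 - Real.exp (-(c * βhat))) * (lamp * βI)
            = lamp * (((1 - Real.exp (-(c * βhat))) / βhat) * βI) * βhat := by
              field_simp
          _ ≤ L * βhat := hkey2
          _ = βhat * L := mul_comm _ _
      have h15 : (0:ℝ) < 1 - u := by linarith
      have h4 : Real.exp (-(u / (1 - u))) ≤ 1 - u := by
        have h7 : 1 / (1 - u) ≤ Real.exp (u / (1 - u)) := by
          rw [show (1:ℝ) / (1 - u) = u / (1 - u) + 1 from by field_simp; ring]
          exact Real.add_one_le_exp _
        have h8 : (1 - u)⁻¹ ≤ Real.exp (u / (1 - u)) := by rw [← one_div]; exact h7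
        rw [Real.exp_neg]
        calc (Real.exp (u / (1 - u)))⁻¹ ≤ ((1 - u)⁻¹)⁻¹ :=
              inv_anti₀ (by positivity) h8
          _ = 1 - u := inv_inv _
      have h9 : Real.exp (-(u / (1 - u))) ≤ Real.exp (-(c * βhat)) := by linarith
      have h10 : c * βhat ≤ u / (1 - u) := by
        have := Real.exp_le_exp.1 h9
        linarith
      have h11 : u / (1 - u) = cmax * βhat := by
        rw [hu, hcmax]
        field_simp [hlbpos.ne', hden.ne']
      have : c * βhat ≤ cmax * βhat := by rw [← h11]; exact h10
      exact le_of_mul_le_mul_right this hβhat0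
    rw [hCstar]
    have hsup_le : (⨆ (c : ℝ) (_ : 0 < c ∧ 1 - ε ≤ P1 c * P2 c), ENNReal.ofReal c) ≤
        ENNReal.ofReal cmax :=
      iSup_le fun c => iSup_le fun hc => ENNReal.ofReal_le_ofReal (hstep c hc)
    calc ENNReal.ofReal (lamp * (1 - ε)) *
          (⨆ (c : ℝ) (_ : 0 < c ∧ 1 - ε ≤ P1 c * P2 c), ENNReal.ofReal c)
        ≤ ENNReal.ofReal (lamp * (1 - ε)) * ENNReal.ofReal cmax :=
          mul_le_mul_right hsup_le _
      _ = ENNReal.ofReal (lamp * Cp / (lamp - βhat / βI * L)) := by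
          rw [← ENNReal.ofReal_mul (by positivity : (0:ℝ) ≤ lamp * (1 - ε))]
          congr 1
          rw [hCp, hcmax]
          have hd2 : lamp - βhat / βI * L = (lamp * βI - βhat * L) / βI := by
            field_simp
          rw [hd2]
          field_simp
end

section
/- Fix λ_p>0 and assume 0<β_I<∞ and k := ∫_{ℝ²}β(y)f(y)dy ∈ (0,∞). Define the outage probability γ(c̄) = 1 − P₁(c̄,λ_p)P₂(c̄) for c̄>0, and assume γ is strictly increasing on (0,∞). Then the constrained transmission capacity C*(ε,T) = λ_p(1−ε)·sup{c̄>0 : γ(c̄) ≤ ε} satisfies C*(ε,T) = (1−ε)·(ε λ_p/(λ_p β_I + k) + o(ε)) as ε→0⁺; equivalently lim_{ε→0⁺} C*(ε,T)/(ε(1−ε)) = λ_p/(λ_p β_I + k). In particular, lim_{c̄→0⁺} γ(c̄)/c̄ = λ_p β_I + k. -/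
open MeasureTheory ProbabilityTheory Filter Real
open scoped ProbabilityTheory

local notation "E2" => EuclideanSpace ℝ (Fin 2)

/-!
Dominated convergence, with the domination `1 - e^{-c̄β} ≤ c̄β`, gives
`∫(1 - e^{-c̄β}) / c̄ → ∫β` and `(1 - P₂(c̄)) / c̄ → ∫βf = k` as `c̄ → 0⁺`; and `∫β = β_I`,
because `β` is the convolution of `f` with a reflected translate of the kernel
`u ↦ g u / (g z / T + g u)` and `∫f = 1`. Since `1 - e^{-t} ~ t`, this gives
`γ(c̄) ~ (λ_p β_I + k) c̄ =: L c̄`. For a nondecreasing `γ`, this linear behaviour at `0⁺` inverts to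
`sup {c̄ : γ(c̄) ≤ ε} ~ ε / L`, which is the capacity asymptotics.
-/

open Set Topology

section Sublevel

variable {γ : ℝ → ℝ} {L : ℝ}

theorem eventually_forall_lt_mul_of_tendsto_div (hγ : MonotoneOn γ (Ioi 0))
    (hlim : Tendsto (fun c => γ c / c) (𝓝[>] 0) (𝓝 L)) {b : ℝ} (hb : 0 < b) (hbL : b⁻¹ < L) :
    ∀ᶠ ε in 𝓝[>] 0, ∀ c, 0 < c → γ c ≤ ε → c < b * ε := by
  obtain ⟨c₁, hc₁, hlow⟩ := mem_nhdsGT_iff_exists_Ioo_subset.1 (hlim.eventually_const_lt hbL)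
  have hlin : ∀ c ∈ Ioo 0 c₁, c < b * γ c := fun c hc => by
    have h := (lt_div_iff₀ hc.1).1 (hlow hc)
    calc c = b * (b⁻¹ * c) := by field_simp
      _ < b * γ c := by gcongr
  have hc₂ : c₁ / 2 ∈ Ioo 0 c₁ := ⟨half_pos hc₁, half_lt_self hc₁⟩
  have hγc₂ : 0 < γ (c₁ / 2) := by
    have := hlin _ hc₂
    nlinarith [hc₂.1]
  filter_upwards [Ioo_mem_nhdsGT hγc₂] with ε hε c hc hcε
  have hcc₂ : c < c₁ / 2 := by
    by_contra! h
    exact (hε.2.trans_le ((hγ hc₂.1 hc h).trans hcε)).false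
  calc c < b * γ c := hlin c ⟨hc, hcc₂.trans hc₂.2⟩
    _ ≤ b * ε := by gcongr

theorem eventually_apply_mul_lt_of_tendsto_div
    (hlim : Tendsto (fun c => γ c / c) (𝓝[>] 0) (𝓝 L)) {a : ℝ} (ha : 0 < a) (haL : L < a⁻¹) :
    ∀ᶠ ε in 𝓝[>] 0, γ (a * ε) < ε := by
  have hmul : Tendsto (fun ε => a * ε) (𝓝[>] 0) (𝓝[>] 0) := by
    refine tendsto_nhdsWithin_of_tendsto_nhds_of_eventually_within _ ?_ ?_
    · simpa using (tendsto_nhdsWithin_of_tendsto_nhds (tendsto_id (x := 𝓝 (0 : ℝ)))).const_mul a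
    · filter_upwards [self_mem_nhdsWithin] with ε (hε : 0 < ε) using mul_pos ha hε
  filter_upwards [self_mem_nhdsWithin, hmul.eventually (hlim.eventually_lt_const haL)]
    with ε (hε : 0 < ε) hlt
  rw [div_lt_iff₀ (mul_pos ha hε), inv_mul_cancel_left₀ ha.ne'] at hlt
  exact hlt

theorem tendsto_sSup_sublevel_div (hγ : MonotoneOn γ (Ioi 0)) (hL : 0 < L)
    (hlim : Tendsto (fun c => γ c / c) (𝓝[>] 0) (𝓝 L)) :
    Tendsto (fun ε => sSup {c | 0 < c ∧ γ c ≤ ε} / ε) (𝓝[>] 0) (𝓝 L⁻¹) := by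
  rw [tendsto_order]
  constructor
  · intro a haL
    obtain ⟨a', ha'a, ha'L⟩ := exists_between (max_lt haL (inv_pos.2 hL))
    have ha' : 0 < a' := (le_max_right a 0).trans_lt ha'a
    filter_upwards [self_mem_nhdsWithin,
      eventually_apply_mul_lt_of_tendsto_div hlim ha' ((lt_inv_comm₀ ha' hL).1 ha'L),
      eventually_forall_lt_mul_of_tendsto_div hγ hlim (by positivity : 0 < L⁻¹ + 1)
        (inv_lt_of_inv_lt₀ hL (lt_add_one _))] with ε (hε : 0 < ε) hmem hbdd
    have hle : a' * ε ≤ sSup {c | 0 < c ∧ γ c ≤ ε} :=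
      le_csSup ⟨_, fun c hc => (hbdd c hc.1 hc.2).le⟩ ⟨mul_pos ha' hε, hmem.le⟩
    rw [lt_div_iff₀ hε]
    nlinarith [le_max_left a 0]
  · intro b hLb
    obtain ⟨b', hLb', hb'b⟩ := exists_between hLb
    have hb' : 0 < b' := (inv_pos.2 hL).trans hLb'
    filter_upwards [self_mem_nhdsWithin,
      eventually_forall_lt_mul_of_tendsto_div hγ hlim hb' (inv_lt_of_inv_lt₀ hL hLb')]
      with ε (hε : 0 < ε) hlt
    rw [div_lt_iff₀ hε]
    calc sSup {c | 0 < c ∧ γ c ≤ ε} ≤ b' * ε :=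
          Real.sSup_le (fun c hc => (hlt c hc.1 hc.2).le) (by positivity)
      _ < b * ε := by gcongr

end Sublevel

theorem tendsto_comp_div_of_hasDerivAt {φ : ℝ → ℝ} {φ' a : ℝ} {l : Filter ℝ} {u v : ℝ → ℝ}
    (hφ : HasDerivAt φ φ' 0) (hφ0 : φ 0 = 0) (hu : Tendsto u l (𝓝 0))
    (huv : Tendsto (fun x => u x / v x) l (𝓝 a)) :
    Tendsto (fun x => φ (u x) / v x) l (𝓝 (φ' * a)) := by
  -- `φ u = u * dslope φ 0 u`, and `dslope φ 0` is continuous at `0` with value `φ'`.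
  have hslope : Tendsto (fun x => dslope φ 0 (u x)) l (𝓝 φ') := by
    have := (continuousAt_dslope_same.2 hφ.differentiableAt).tendsto.comp hu
    rwa [dslope_same, hφ.deriv] at this
  refine (hslope.mul huv).congr fun x => ?_
  have hφu := sub_smul_dslope φ 0 (u x)
  rw [sub_zero, smul_eq_mul, hφ0, sub_zero] at hφu
  simp only [← hφu]
  ring

theorem hasDerivAt_one_sub_exp_neg : HasDerivAt (fun t => 1 - exp (-t)) 1 0 := by
  simpa using ((hasDerivAt_id (0 : ℝ)).neg.exp).const_sub 1

theorem tendsto_one_sub_exp_neg_mul_div (b : ℝ) :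
    Tendsto (fun c => (1 - exp (-(c * b))) / c) (𝓝[>] 0) (𝓝 b) := by
  have hu : Tendsto (fun c : ℝ => c * b) (𝓝[>] 0) (𝓝 0) := by
    simpa using (tendsto_nhdsWithin_of_tendsto_nhds (tendsto_id (x := 𝓝 (0 : ℝ)))).mul_const b
  have huv : Tendsto (fun c : ℝ => c * b / c) (𝓝[>] 0) (𝓝 b) := by
    refine tendsto_const_nhds.congr' ?_
    filter_upwards [self_mem_nhdsWithin] with c (hc : 0 < c)
    field_simp
  simpa using tendsto_comp_div_of_hasDerivAt hasDerivAt_one_sub_exp_neg (by simp) hu huv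

theorem tendsto_one_sub_exp_neg_mul_mul_div_of_tendsto {A B : ℝ → ℝ} {a k lam : ℝ}
    (hA : Tendsto (fun c => A c / c) (𝓝[>] 0) (𝓝 a))
    (hB : Tendsto (fun c => (1 - B c) / c) (𝓝[>] 0) (𝓝 k)) :
    Tendsto (fun c => (1 - exp (-(lam * A c)) * B c) / c) (𝓝[>] 0) (𝓝 (lam * a + k)) := by
  have hlamA : Tendsto (fun c => lam * A c / c) (𝓝[>] 0) (𝓝 (lam * a)) := by
    simpa only [mul_div_assoc] using hA.const_mul lam
  have hlamA0 : Tendsto (fun c => lam * A c) (𝓝[>] 0) (𝓝 0) := by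
    have := hlamA.mul (tendsto_nhdsWithin_of_tendsto_nhds (tendsto_id (x := 𝓝 (0 : ℝ))))
    rw [mul_zero] at this
    refine this.congr' ?_
    filter_upwards [self_mem_nhdsWithin] with c (hc : 0 < c)
    exact div_mul_cancel₀ _ hc.ne'
  have hexp : Tendsto (fun c => exp (-(lam * A c))) (𝓝[>] 0) (𝓝 1) := by
    have h := (continuous_exp.tendsto (-0)).comp hlamA0.neg
    rwa [neg_zero, exp_zero] at h
  have h := (tendsto_comp_div_of_hasDerivAt hasDerivAt_one_sub_exp_neg (by simp) hlamA0
    hlamA).add (hexp.mul hB)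
  rw [one_mul, one_mul] at h
  refine h.congr fun c => ?_
  ring

section Dominated

variable {α : Type*} [MeasurableSpace α] {μ : Measure α} {b w : α → ℝ}

theorem tendsto_integral_one_sub_exp_neg_mul_mul_div (hb : 0 ≤ᵐ[μ] b) (hw : 0 ≤ᵐ[μ] w)
    (hbm : AEStronglyMeasurable b μ) (hwm : AEStronglyMeasurable w μ)
    (hbw : Integrable (fun x => b x * w x) μ) :
    Tendsto (fun c => (∫ x, (1 - exp (-(c * b x))) * w x ∂μ) / c) (𝓝[>] 0)
      (𝓝 (∫ x, b x * w x ∂μ)) := by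
  simp_rw [← integral_div]
  refine tendsto_integral_filter_of_dominated_convergence _
    (Eventually.of_forall fun c => by fun_prop) ?_ hbw (Eventually.of_forall fun x => ?_)
  · filter_upwards [self_mem_nhdsWithin] with c (hc : 0 < c)
    filter_upwards [hb, hw] with x (hbx : 0 ≤ b x) (hwx : 0 ≤ w x)
    have hexp_le : exp (-(c * b x)) ≤ 1 := exp_le_one_iff.2 (by nlinarith)
    have hlin : 1 - exp (-(c * b x)) ≤ c * b x := by linarith [one_sub_le_exp_neg (c * b x)]
    rw [Real.norm_of_nonneg (by positivity), div_le_iff₀ hc]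
    nlinarith
  · simpa only [div_mul_eq_mul_div] using (tendsto_one_sub_exp_neg_mul_div (b x)).mul_const (w x)

theorem tendsto_integral_one_sub_exp_neg_mul_div (hb : 0 ≤ᵐ[μ] b) (hbi : Integrable b μ) :
    Tendsto (fun c => (∫ x, (1 - exp (-(c * b x))) ∂μ) / c) (𝓝[>] 0) (𝓝 (∫ x, b x ∂μ)) := by
  simpa using tendsto_integral_one_sub_exp_neg_mul_mul_div hb (ae_of_all _ fun _ => zero_le_one)
    hbi.1 aestronglyMeasurable_const (by simpa using hbi)

theorem tendsto_one_sub_integral_exp_neg_mul_mul_div (hb : 0 ≤ᵐ[μ] b) (hw : 0 ≤ᵐ[μ] w)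
    (hbm : AEStronglyMeasurable b μ) (hwi : Integrable w μ) (hw1 : ∫ x, w x ∂μ = 1)
    (hbw : Integrable (fun x => b x * w x) μ) :
    Tendsto (fun c => (1 - ∫ x, exp (-(c * b x)) * w x ∂μ) / c) (𝓝[>] 0)
      (𝓝 (∫ x, b x * w x ∂μ)) := by
  refine (tendsto_integral_one_sub_exp_neg_mul_mul_div hb hw hbm hwi.1 hbw).congr' ?_
  filter_upwards [self_mem_nhdsWithin] with c (hc : 0 < c)
  have hexp_w : Integrable (fun x => exp (-(c * b x)) * w x) μ := by
    refine hwi.bdd_mul (c := 1) (by fun_prop) ?_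
    filter_upwards [hb] with x (hbx : 0 ≤ b x)
    rw [Real.norm_of_nonneg (exp_pos _).le]
    exact exp_le_one_iff.2 (by nlinarith)
  simp only [sub_mul, one_mul]
  rw [integral_sub hwi hexp_w, hw1]

end Dominated

open scoped Convolution

section Shift

variable {G : Type*} [AddCommGroup G] [MeasurableSpace G] {μ : Measure G} {H f : G → ℝ}

theorem integral_sub_sub_mul_eq_convolution (z y : G) :
    ∫ x, H (x - y - z) * f x ∂μ = (f ⋆[ContinuousLinearMap.mul ℝ ℝ, μ] fun u => H (-u - z)) y := by
  simp only [convolution_def, ContinuousLinearMap.mul_apply', neg_sub, mul_comm]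

theorem integral_sub_sub_mul_nonneg [MeasurableAdd G] [μ.IsAddRightInvariant]
    (hH : 0 ≤ᵐ[μ] H) (hf : 0 ≤ f) (z y : G) : 0 ≤ ∫ x, H (x - y - z) * f x ∂μ := by
  refine integral_nonneg_of_ae ?_
  filter_upwards [(measurePreserving_sub_right μ (y + z)).quasiMeasurePreserving.ae hH] with x hx
  rw [sub_sub]
  exact mul_nonneg hx (hf x)

variable [MeasurableAdd₂ G] [MeasurableNeg G] [SFinite μ] [μ.IsAddRightInvariant]
  [μ.IsNegInvariant]

theorem MeasureTheory.Integrable.integral_sub_sub_mul (hH : Integrable H μ)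
    (hf : Integrable f μ) (z : G) : Integrable (fun y => ∫ x, H (x - y - z) * f x ∂μ) μ := by
  simp only [integral_sub_sub_mul_eq_convolution]
  exact hf.integrable_convolution _ (hH.comp_sub_right z).comp_neg

theorem integral_integral_sub_sub_mul (hH : Integrable H μ) (hf : Integrable f μ) (z : G) :
    ∫ y, ∫ x, H (x - y - z) * f x ∂μ ∂μ = (∫ u, H u ∂μ) * ∫ x, f x ∂μ := by
  simp only [integral_sub_sub_mul_eq_convolution]
  rw [integral_convolution _ hf (hH.comp_sub_right z).comp_neg, ContinuousLinearMap.mul_apply',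
    integral_neg_eq_self (fun u => H (u - z)), integral_sub_right_eq_self, mul_comm]

end Shift

theorem stmt_11_general
    (g f : E2 → ℝ) (T R lamp : ℝ)
    (hT : 0 < T) (hR : 0 < R) (hlamp : 0 < lamp)
    (hg_pos : ∀ x : E2, x ≠ 0 → 0 < g x)
    (hf_nonneg : ∀ x, 0 ≤ f x)
    (hf_prob : ∫ x, f x = 1)
    (z : E2) (hz : z = EuclideanSpace.single (0 : Fin 2) R)
    (β : E2 → ℝ)
    (hβ : ∀ y, β y = ∫ x, g (x - y - z) / (g z / T + g (x - y - z)) * f x)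
    (βI : ℝ) (hβI : βI = ∫ u, g u / (g z / T + g u))
    (hβI_fin : Integrable fun u : E2 => g u / (g z / T + g u))
    (hβI_pos : 0 < βI)
    (k : ℝ) (hk : k = ∫ y, β y * f y)
    (hk_fin : Integrable fun y => β y * f y) (hk_pos : 0 < k)
    (γ : ℝ → ℝ)
    (hγ : ∀ cbar, γ cbar =
      1 - Real.exp (-(lamp * ∫ y, (1 - Real.exp (-(cbar * β y))))) *
        ∫ y, Real.exp (-(cbar * β y)) * f y)
    (hγ_mono : StrictMonoOn γ (Set.Ioi 0))
    (Cstar : ℝ → ℝ)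
    (hCstar : ∀ ε, Cstar ε = lamp * (1 - ε) * sSup {c : ℝ | 0 < c ∧ γ c ≤ ε}) :
    Tendsto (fun ε => Cstar ε / (ε * (1 - ε))) (nhdsWithin 0 (Set.Ioi 0))
        (nhds (lamp / (lamp * βI + k))) ∧
      Tendsto (fun c => γ c / c) (nhdsWithin 0 (Set.Ioi 0)) (nhds (lamp * βI + k)) := by
  have hgz : 0 < g z := hg_pos z (by simpa [hz] using hR.ne')
  have hf : Integrable f := by
    by_contra h
    simp [integral_undef h] at hf_prob
  have hH : 0 ≤ᵐ[volume] fun u : E2 => g u / (g z / T + g u) := by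
    filter_upwards [volume.ae_ne 0] with u hu
    have := hg_pos u hu
    positivity
  have hβ_eq : β = fun y => ∫ x, g (x - y - z) / (g z / T + g (x - y - z)) * f x := funext hβ
  have hβ_int : Integrable β := by
    rw [hβ_eq]
    exact hβI_fin.integral_sub_sub_mul hf z
  have hβ_nonneg : 0 ≤ᵐ[volume] β :=
    ae_of_all _ fun y => hβ_eq ▸ integral_sub_sub_mul_nonneg hH hf_nonneg z y
  have hβ_integral : ∫ y, β y = βI := by
    rw [hβ_eq, integral_integral_sub_sub_mul hβI_fin hf, hf_prob, mul_one, hβI]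
  have hγ_div : Tendsto (fun c => γ c / c) (𝓝[>] 0) (𝓝 (lamp * βI + k)) := by
    refine (tendsto_one_sub_exp_neg_mul_mul_div_of_tendsto (lam := lamp) ?_ ?_).congr
      fun c => by rw [hγ]
    · exact hβ_integral ▸ tendsto_integral_one_sub_exp_neg_mul_div hβ_nonneg hβ_int
    · exact hk ▸ tendsto_one_sub_integral_exp_neg_mul_mul_div hβ_nonneg (ae_of_all _ hf_nonneg)
        hβ_int.1 hf hf_prob hk_fin
  refine ⟨?_, hγ_div⟩
  have h := (tendsto_sSup_sublevel_div hγ_mono.monotoneOn (by positivity) hγ_div).const_mul lamp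
  rw [← div_eq_mul_inv] at h
  refine h.congr' ?_
  filter_upwards [Ioo_mem_nhdsGT one_pos] with ε ⟨hε0, hε1⟩
  have : 1 - ε ≠ 0 := by linarith
  rw [hCstar]
  field_simp

/-- Small-outage asymptotics of the constrained transmission capacity:
`C*(ε,T) = (1-ε)(ελ_p/(λ_pβ_I + k) + o(ε))` as `ε → 0⁺`, i.e.
`C*(ε,T)/(ε(1-ε)) → λ_p/(λ_pβ_I + k)`; in particular `γ(c̄)/c̄ → λ_pβ_I + k`
as `c̄ → 0⁺`. -/
theorem stmt_11
    (g f : E2 → ℝ) (T R lamp : ℝ)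
    (hT : 0 < T) (hR : 0 < R) (hlamp : 0 < lamp)
    (hg_pos : ∀ x : E2, x ≠ 0 → 0 < g x)
    (hg_cont : ContinuousOn g {(0 : E2)}ᶜ)
    (hg_mono : ∀ x y : E2, x ≠ 0 → y ≠ 0 → ‖x‖ ≤ ‖y‖ → g y ≤ g x)
    (hg_int : ∀ δ : ℝ, 0 < δ → IntegrableOn g (Metric.ball (0 : E2) δ)ᶜ)
    (hf_meas : Measurable f) (hf_nonneg : ∀ x, 0 ≤ f x)
    (hf_prob : ∫ x, f x = 1)
    (hf_iso : ∀ x y : E2, ‖x‖ = ‖y‖ → f x = f y)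
    (z : E2) (hz : z = EuclideanSpace.single (0 : Fin 2) R)
    (β : E2 → ℝ)
    (hβ : ∀ y, β y = ∫ x, g (x - y - z) / (g z / T + g (x - y - z)) * f x)
    (βI : ℝ) (hβI : βI = ∫ u, g u / (g z / T + g u))
    (hβI_fin : Integrable fun u : E2 => g u / (g z / T + g u))
    (hβI_pos : 0 < βI)
    (k : ℝ) (hk : k = ∫ y, β y * f y)
    (hk_fin : Integrable fun y => β y * f y) (hk_pos : 0 < k)
    (γ : ℝ → ℝ)
    (hγ : ∀ cbar, γ cbar =
      1 - Real.exp (-(lamp * ∫ y, (1 - Real.exp (-(cbar * β y))))) *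
        ∫ y, Real.exp (-(cbar * β y)) * f y)
    (hγ_mono : StrictMonoOn γ (Set.Ioi 0))
    (Cstar : ℝ → ℝ)
    (hCstar : ∀ ε, Cstar ε = lamp * (1 - ε) * sSup {c : ℝ | 0 < c ∧ γ c ≤ ε}) :
    Tendsto (fun ε => Cstar ε / (ε * (1 - ε))) (nhdsWithin 0 (Set.Ioi 0))
        (nhds (lamp / (lamp * βI + k))) ∧
      Tendsto (fun c => γ c / c) (nhdsWithin 0 (Set.Ioi 0)) (nhds (lamp * βI + k)) :=
  stmt_11_general g f T R lamp hT hR hlamp hg_pos hf_nonneg hf_prob z hz β hβ βI hβI hβI_fin hβI_pos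
    k hk hk_fin hk_pos γ hγ hγ_mono Cstar hCstar
end

section
/- Let m≥1 be an integer, let c>0, and let h be Gamma-distributed with shape m and rate c (density c^m t^{m−1} e^{−ct}/(m−1)! on [0,∞)), independent of a nonnegative real random variable I. Let L_I(s)=E[e^{−sI}] denote the Laplace transform of I, which is smooth on (0,∞). Then for every a>0, P(h ≥ aI) = Σ_{k=0}^{m−1} ((−ca)^k/k!) · L_I^{(k)}(ca), where L_I^{(k)} is the k-th derivative of L_I. -/
open MeasureTheory ProbabilityTheory Filter Real
open scoped ProbabilityTheory

/-! Conditionally on `I`, the event `h ≥ aI` has probability given by the Gamma tail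
`P(h ≥ x) = e^{-cx} ∑_{k<m} (cx)^k / k!`, which follows by differentiating the right-hand side
(the sum telescopes to the Gamma density). Taking expectations with `x = aI` gives
`∑_k ((-ca)^k / k!) E[(-I)^k e^{-caI}]`, and `E[(-I)^k e^{-sI}]` is the `k`-th derivative of
`L`, which is the moment generating function of `-I`, finite on a neighbourhood of every `s > 0`. -/

open Finset Nat Topology

noncomputable def erlangTail (m : ℕ) (x : ℝ) : ℝ :=
  exp (-x) * ∑ k ∈ range m, x ^ k / k !

lemma erlangTail_succ (n : ℕ) (x : ℝ) :
    erlangTail (n + 1) x = erlangTail n x + x ^ n / n ! * exp (-x) := by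
  simp only [erlangTail, sum_range_succ]
  ring

lemma erlangTail_nonneg (m : ℕ) {x : ℝ} (hx : 0 ≤ x) : 0 ≤ erlangTail m x := by
  unfold erlangTail
  positivity

lemma erlangTail_mul_eq_sum (m : ℕ) (s y : ℝ) :
    erlangTail m (s * y) = ∑ k ∈ range m, (-s) ^ k / k ! * ((-y) ^ k * exp (s * -y)) := by
  rw [erlangTail, mul_sum]
  refine sum_congr rfl fun k _ => ?_
  rw [mul_neg, ← neg_mul_neg s y, mul_pow]
  ring

lemma hasDerivAt_erlangTail_succ (n : ℕ) (x : ℝ) :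
    HasDerivAt (erlangTail (n + 1)) (-(x ^ n / n ! * exp (-x))) x := by
  induction n with
  | zero =>
    have h_one : erlangTail 1 = fun x => exp (-x) := funext fun x => by simp [erlangTail]
    simpa [h_one] using (hasDerivAt_neg x).exp
  | succ n ih =>
    rw [funext (erlangTail_succ (n + 1))]
    have hterm :=
      ((hasDerivAt_pow (n + 1) x).div_const ((n + 1) ! : ℝ)).fun_mul (hasDerivAt_neg x).exp
    refine (ih.fun_add hterm).congr_deriv ?_
    rw [Nat.factorial_succ, Nat.add_sub_cancel]
    push_cast
    field_simp
    ring

lemma tendsto_erlangTail_atTop (m : ℕ) : Tendsto (erlangTail m) atTop (𝓝 0) := by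
  have hterm (k : ℕ) : Tendsto (fun x : ℝ => x ^ k * exp (-x) / k !) atTop (𝓝 0) := by
    simpa using (tendsto_pow_mul_exp_neg_atTop_nhds_zero k).div_const (k ! : ℝ)
  have hsum := tendsto_finsetSum (range m) fun k _ => hterm k
  rw [sum_const_zero] at hsum
  refine hsum.congr fun x => ?_
  rw [erlangTail, mul_sum]
  exact sum_congr rfl fun k _ => by ring

lemma gammaPDF_natCast_succ {n : ℕ} {c t : ℝ} (ht : 0 ≤ t) :
    gammaPDF ((n + 1 : ℕ) : ℝ) c t =
      ENNReal.ofReal (c * ((c * t) ^ n / n ! * exp (-(c * t)))) := by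
  rw [gammaPDF_of_nonneg ht, Nat.cast_add_one, Real.Gamma_nat_eq_factorial, add_sub_cancel_right,
    rpow_natCast, ← Nat.cast_add_one, rpow_natCast]
  congr 1
  ring

lemma gammaMeasure_natCast_Ici (m : ℕ) {c x : ℝ} (hc : 0 < c) (hx : 0 ≤ x) :
    gammaMeasure (m : ℝ) c (Set.Ici x) = ENNReal.ofReal (erlangTail m (c * x)) := by
  cases m with
  | zero =>
    -- `Γ 0 = 0`, so the shape-`0` density is the junk value `0`.
    simp [gammaMeasure, gammaPDF, gammaPDFReal, erlangTail]
  | succ n =>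
    set f : ℝ → ℝ := fun t => c * ((c * t) ^ n / n ! * exp (-(c * t)))
    have hderiv :
        ∀ t ∈ Set.Ici x, HasDerivAt (fun t => -erlangTail (n + 1) (c * t)) (f t) t := by
      intro t _
      have := ((hasDerivAt_erlangTail_succ n (c * t)).comp t
        ((hasDerivAt_id t).const_mul c)).fun_neg
      simpa [f, mul_comm] using this
    have hf_nonneg : ∀ t ∈ Set.Ici x, 0 ≤ f t := fun t ht => by
      have : 0 ≤ t := hx.trans ht
      positivity
    have hf_nonneg' : ∀ t ∈ Set.Ioi x, 0 ≤ f t :=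
      fun t ht => hf_nonneg t (Set.Ioi_subset_Ici_self ht)
    have hlim : Tendsto (fun t => -erlangTail (n + 1) (c * t)) atTop (𝓝 0) := by
      simpa using ((tendsto_erlangTail_atTop _).comp (tendsto_id.const_mul_atTop hc)).neg
    have hint := integrableOn_Ioi_deriv_of_nonneg' hderiv hf_nonneg' hlim
    rw [gammaMeasure, withDensity_apply _ measurableSet_Ici,
      setLIntegral_congr_fun measurableSet_Ici fun t ht => gammaPDF_natCast_succ (hx.trans ht),
      ← ofReal_integral_eq_lintegral_ofReal ((integrableOn_Ici_iff_integrableOn_Ioi).mpr hint)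
        ((ae_restrict_mem measurableSet_Ici).mono hf_nonneg),
      integral_Ici_eq_integral_Ioi, integral_Ioi_of_hasDerivAt_of_nonneg' hderiv hf_nonneg' hlim]
    simp

lemma measure_le_eq_lintegral_map_Ici {Ω : Type*} [MeasurableSpace Ω] {μ : Measure Ω}
    [IsFiniteMeasure μ] {X Y : Ω → ℝ} (hX : Measurable X) (hY : Measurable Y)
    (hXY : IndepFun X Y μ) :
    μ {ω | X ω ≤ Y ω} = ∫⁻ ω, μ.map Y (Set.Ici (X ω)) ∂μ := by
  have hS : MeasurableSet {p : ℝ × ℝ | p.1 ≤ p.2} :=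
    measurableSet_le measurable_fst measurable_snd
  have hprod : μ.map (fun ω => (X ω, Y ω)) = (μ.map X).prod (μ.map Y) :=
    (indepFun_iff_map_prod_eq_prod_map_map hX.aemeasurable hY.aemeasurable).mp hXY
  calc μ {ω | X ω ≤ Y ω} = μ.map (fun ω => (X ω, Y ω)) {p | p.1 ≤ p.2} :=
        (Measure.map_apply (hX.prodMk hY) hS).symm
    _ = ∫⁻ x, μ.map Y (Set.Ici x) ∂(μ.map X) := by
        rw [hprod, Measure.prod_apply hS]
        rfl
    _ = ∫⁻ ω, μ.map Y (Set.Ici (X ω)) ∂μ :=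
        lintegral_map (measurable_measure_prodMk_left hS) hX

lemma mem_interior_integrableExpSet_neg {Ω : Type*} [MeasurableSpace Ω] {μ : Measure Ω}
    [IsFiniteMeasure μ] {X : Ω → ℝ} (hX : Measurable X) (hX_nonneg : ∀ ω, 0 ≤ X ω)
    {s : ℝ} (hs : 0 < s) : s ∈ interior (integrableExpSet (fun ω => -X ω) μ) := by
  refine interior_maximal (fun t ht => ?_) isOpen_Ioi hs
  refine Integrable.of_bound (by fun_prop) 1 (ae_of_all _ fun ω => ?_)
  rw [norm_of_nonneg (exp_nonneg _), exp_le_one_iff]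
  nlinarith [hX_nonneg ω, ht.out]

theorem stmt_13_general
    {Ω : Type*} [MeasureSpace Ω] [IsProbabilityMeasure (ℙ : Measure Ω)]
    (m : ℕ) (c : ℝ) (hc : 0 < c)
    (h I : Ω → ℝ)
    (hh_meas : Measurable h) (hI_meas : Measurable I)
    (hI_nonneg : ∀ ω, 0 ≤ I ω)
    (hindep : IndepFun h I ℙ)
    (hh_gamma : Measure.map h ℙ = gammaMeasure (m : ℝ) c)
    (L : ℝ → ℝ) (hL : ∀ s, L s = ∫ ω, Real.exp (-(s * I ω)))
    (a : ℝ) (ha : 0 < a) :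
    (ℙ {ω | a * I ω ≤ h ω}).toReal =
      ∑ k ∈ Finset.range m, ((-(c * a)) ^ k / Nat.factorial k) * iteratedDeriv k L (c * a) := by
  have hL_mgf : L = mgf (fun ω => -I ω) ℙ := funext fun s => by simp [hL, mgf, mul_neg]
  have hca := mem_interior_integrableExpSet_neg (μ := ℙ) hI_meas hI_nonneg (mul_pos hc ha)
  have hterm (k : ℕ) : Integrable (fun ω => (-I ω) ^ k * exp (c * a * -I ω)) ℙ :=
    integrable_pow_mul_exp_of_mem_interior_integrableExpSet hca k
  have htail (ω : Ω) : gammaMeasure (m : ℝ) c (Set.Ici (a * I ω))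
      = ENNReal.ofReal (erlangTail m (c * a * I ω)) := by
    rw [gammaMeasure_natCast_Ici m hc (mul_nonneg ha.le (hI_nonneg ω)), mul_assoc]
  have hint : Integrable (fun ω => erlangTail m (c * a * I ω)) ℙ := by
    simp_rw [erlangTail_mul_eq_sum]
    exact integrable_finsetSum _ fun k _ => (hterm k).const_mul _
  calc (ℙ {ω | a * I ω ≤ h ω}).toReal
      = (∫⁻ ω, ENNReal.ofReal (erlangTail m (c * a * I ω)) ∂ℙ).toReal := by
        rw [measure_le_eq_lintegral_map_Ici (hI_meas.const_mul a) hh_meas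
          (hindep.symm.comp (measurable_const_mul a) measurable_id), hh_gamma]
        simp_rw [htail]
    _ = ∫ ω, erlangTail m (c * a * I ω) ∂ℙ :=
        (integral_eq_lintegral_of_nonneg_ae (ae_of_all _ fun ω => erlangTail_nonneg m
          (mul_nonneg (mul_pos hc ha).le (hI_nonneg ω))) hint.aestronglyMeasurable).symm
    _ = _ := by
        simp_rw [erlangTail_mul_eq_sum]
        rw [integral_finsetSum _ fun k _ => (hterm k).const_mul _]
        simp_rw [integral_const_mul, hL_mgf, iteratedDeriv_mgf hca]

/-- Success probability under Nakagami-`m` fading: if `h` is Gamma-distributed with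
integer shape `m` and rate `c`, independent of the nonnegative interference `I`,
then `P(h ≥ aI) = ∑_{k=0}^{m-1} ((-ca)^k/k!)·L_I^{(k)}(ca)`, where `L_I` is the
Laplace transform of `I`. -/
theorem stmt_13
    {Ω : Type*} [MeasureSpace Ω] [IsProbabilityMeasure (ℙ : Measure Ω)]
    (m : ℕ) (hm : 1 ≤ m) (c : ℝ) (hc : 0 < c)
    (h I : Ω → ℝ)
    (hh_meas : Measurable h) (hI_meas : Measurable I)
    (hI_nonneg : ∀ ω, 0 ≤ I ω)
    (hindep : IndepFun h I ℙ)
    (hh_gamma : Measure.map h ℙ = gammaMeasure (m : ℝ) c)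
    (L : ℝ → ℝ) (hL : ∀ s, L s = ∫ ω, Real.exp (-(s * I ω)))
    (a : ℝ) (ha : 0 < a) :
    (ℙ {ω | a * I ω ≤ h ω}).toReal =
      ∑ k ∈ Finset.range m, ((-(c * a)) ^ k / Nat.factorial k) * iteratedDeriv k L (c * a) :=
  stmt_13_general m c hc h I hh_meas hI_meas hI_nonneg hindep hh_gamma L hL a ha
end

section
/- Let α>2 and T,R>0, and let g(x)=‖x‖^{−α} on ℝ²∖{0}. Then ∫_{ℝ²} g(y)/(g((R,0))/T + g(y)) dy = ∫_{ℝ²} 1/(1 + ‖y‖^α/(T R^α)) dy = R² T^{2/α} C(α), where C(α) = (2π²/α)·csc(2π/α). -/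
open MeasureTheory ProbabilityTheory Filter Real
open scoped ProbabilityTheory

local notation "E2" => EuclideanSpace ℝ (Fin 2)

/-!
Off the origin the integrand equals `1 / (1 + ‖y‖ ^ α / c)` with `c = T R^α`, a radial function,
so polar coordinates reduce the integral to `2π ∫₀^∞ r / (1 + r^α / c) dr`. The substitutions
`u = r^α` and `u = c v` turn this into `(2π / α) c^(2/α) ∫₀^∞ v^(s-1) / (1 + v) dv` with `s = 2/α`.
Writing `1 / (1 + v) = ∫₀^∞ e^{-(1+v)t} dt` and integrating in `v` first gives the Beta integral
`Γ(s) Γ(1-s) = π / sin (π s)`, and `c^(2/α) = R² T^(2/α)`.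
-/

section
open Set

theorem integral_rpow_sub_one_div_one_add_Ioi {s : ℝ} (hs0 : 0 < s) (hs1 : s < 1) :
    ∫ v in Ioi (0 : ℝ), v ^ (s - 1) / (1 + v) = π / sin (π * s) := by
  set μ := volume.restrict (Ioi (0 : ℝ))
  set F : ℝ → ℝ → ℝ := fun v t => v ^ (s - 1) * exp (-((1 + v) * t))
  have F_eq : ∀ v t, F v t = exp (-t) * (v ^ (s - 1) * exp (-(t * v))) := fun v t => by
    simp only [F]
    rw [mul_left_comm, ← exp_add]
    ring_nf
  have F_nonneg : ∀ v > 0, ∀ t, 0 ≤ F v t := fun v hv t => by positivity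
  have integral_dt : ∀ v > 0, ∫ t, F v t ∂μ = v ^ (s - 1) / (1 + v) := fun v hv => by
    have h := integral_exp_mul_Ioi (by linarith : -(1 + v) < 0) 0
    simp only [neg_mul, mul_zero, exp_zero] at h
    rw [integral_const_mul, h, neg_div_neg_eq, one_div, div_eq_mul_inv]
  have integral_dv :
      ∀ t > 0, ∫ v, F v t ∂μ = Gamma s * (exp (-t) * t ^ ((1 - s) - 1)) := fun t ht => by
    simp only [F_eq, μ, integral_const_mul, integral_rpow_mul_exp_neg_mul_Ioi hs0 ht]
    rw [one_div, inv_rpow ht.le, ← rpow_neg ht.le]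
    ring_nf
  have integrable_dv : ∀ t > 0, Integrable (F · t) μ := fun t ht => by
    simp only [F_eq]
    refine Integrable.const_mul ?_ _
    have h := integrableOn_rpow_mul_exp_neg_mul_rpow (by linarith : -1 < s - 1) one_pos ht
    simp only [rpow_one, neg_mul] at h
    exact h
  have hF : Integrable (Function.uncurry F) (μ.prod μ) := by
    refine (integrable_prod_iff' (by fun_prop)).2 ⟨?_, ?_⟩
    · filter_upwards [ae_restrict_mem measurableSet_Ioi] with t ht using integrable_dv t ht
    · refine ((GammaIntegral_convergent (by linarith : 0 < 1 - s)).const_mul (Gamma s)).congr ?_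
      filter_upwards [ae_restrict_mem measurableSet_Ioi] with t ht
      rw [← integral_dv t ht]
      refine integral_congr_ae ?_
      filter_upwards [ae_restrict_mem measurableSet_Ioi] with v hv
      exact (Real.norm_of_nonneg (F_nonneg v hv t)).symm
  calc ∫ v in Ioi (0 : ℝ), v ^ (s - 1) / (1 + v) = ∫ v, ∫ t, F v t ∂μ ∂μ :=
        (setIntegral_congr_fun measurableSet_Ioi fun v hv => integral_dt v hv).symm
    _ = ∫ t, ∫ v, F v t ∂μ ∂μ := integral_integral_swap hF
    _ = ∫ t in Ioi (0 : ℝ), Gamma s * (exp (-t) * t ^ ((1 - s) - 1)) :=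
        setIntegral_congr_fun measurableSet_Ioi fun t ht => integral_dv t ht
    _ = π / sin (π * s) := by
        rw [integral_const_mul, ← Gamma_eq_integral (by linarith), Gamma_mul_Gamma_one_sub]

theorem integral_rpow_sub_one_div_one_add_div_Ioi {s c : ℝ} (hs0 : 0 < s) (hs1 : s < 1)
    (hc : 0 < c) :
    ∫ u in Ioi (0 : ℝ), u ^ (s - 1) / (1 + u / c) = c ^ s * (π / sin (π * s)) := by
  have h := integral_comp_mul_left_Ioi (fun u : ℝ => u ^ (s - 1) / (1 + u / c)) 0 hc
  rw [mul_zero, smul_eq_mul, eq_inv_mul_iff_mul_eq₀ hc.ne'] at h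
  rw [← h, ← integral_rpow_sub_one_div_one_add_Ioi hs0 hs1, ← integral_const_mul,
    ← integral_const_mul]
  refine setIntegral_congr_fun measurableSet_Ioi fun v (hv : 0 < v) => ?_
  rw [mul_rpow hc.le hv.le, mul_div_cancel_left₀ v hc.ne', rpow_sub_one hc.ne']
  field_simp

theorem integral_rpow_sub_one_div_one_add_rpow_div_Ioi {α β c : ℝ} (hβ : 0 < β) (hβα : β < α)
    (hc : 0 < c) :
    ∫ r in Ioi (0 : ℝ), r ^ (β - 1) / (1 + r ^ α / c) =
      c ^ (β / α) / α * (π / sin (π * (β / α))) := by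
  have hα : 0 < α := hβ.trans hβα
  rw [div_mul_eq_mul_div, ← integral_rpow_sub_one_div_one_add_div_Ioi (div_pos hβ hα)
    ((div_lt_one hα).2 hβα) hc,
    ← integral_comp_rpow_Ioi_of_pos (g := fun u => u ^ (β / α - 1) / (1 + u / c)) hα,
    ← integral_div]
  refine setIntegral_congr_fun measurableSet_Ioi fun r (hr : 0 < r) => ?_
  rw [smul_eq_mul, ← rpow_mul hr.le, mul_sub, mul_div_cancel₀ β hα.ne', mul_one]
  have : r ^ (β - 1) = r ^ (α - 1) * r ^ (β - α) := by rw [← rpow_add hr]; ring_nf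
  rw [this]
  field_simp

theorem integral_fun_norm_euclideanSpace_fin_two (f : ℝ → ℝ) :
    ∫ x : EuclideanSpace ℝ (Fin 2), f ‖x‖ = 2 * π * ∫ r in Ioi (0 : ℝ), r * f r := by
  rw [integral_fun_norm_addHaar volume f, finrank_euclideanSpace_fin, measureReal_def,
    EuclideanSpace.volume_ball_fin_two]
  simp [mul_assoc, pi_nonneg]

end

/-- Evaluation of `β_I(R)` for the singular path loss `g(x) = ‖x‖^{-α}`:
`∫_{ℝ²} g(y)/(g(R,0)/T + g(y)) dy = ∫_{ℝ²} 1/(1+‖y‖^α/(TR^α)) dy = R² T^(2/α) C(α)`,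
where `C(α) = (2π²/α) csc(2π/α)`. -/
theorem stmt_14
    (α T R : ℝ) (hα : 2 < α) (hT : 0 < T) (hR : 0 < R)
    (g : E2 → ℝ) (hg : ∀ x, g x = ‖x‖ ^ (-α))
    (z : E2) (hz : z = EuclideanSpace.single (0 : Fin 2) R) :
    (∫ y, g y / (g z / T + g y)) = (∫ y : E2, 1 / (1 + ‖y‖ ^ α / (T * R ^ α))) ∧
      (∫ y, g y / (g z / T + g y)) =
        R ^ 2 * T ^ (2 / α) * (2 * π ^ 2 / α / Real.sin (2 * π / α)) := by
  have hc : 0 < T * R ^ α := by positivity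
  have hgz : g z = R ^ (-α) := by rw [hg, hz, PiLp.norm_single, norm_of_nonneg hR.le]
  have integrand_eq :
      (∫ y, g y / (g z / T + g y)) = ∫ y : E2, 1 / (1 + ‖y‖ ^ α / (T * R ^ α)) := by
    refine integral_congr_ae ?_
    filter_upwards [volume.ae_ne 0] with y hy0
    have hy : 0 < ‖y‖ := norm_pos_iff.2 hy0
    rw [hg, hgz, rpow_neg hy.le, rpow_neg hR.le]
    field_simp
    ring
  have radial : (∫ y : E2, 1 / (1 + ‖y‖ ^ α / (T * R ^ α))) =
      2 * π * ∫ r in Set.Ioi (0 : ℝ), r ^ ((2 : ℝ) - 1) / (1 + r ^ α / (T * R ^ α)) := by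
    rw [integral_fun_norm_euclideanSpace_fin_two fun r => 1 / (1 + r ^ α / (T * R ^ α))]
    congr 1
    refine setIntegral_congr_fun measurableSet_Ioi fun r _ => ?_
    rw [show (2 : ℝ) - 1 = 1 by norm_num, rpow_one, mul_one_div]
  have scaling : (T * R ^ α) ^ (2 / α) = R ^ 2 * T ^ (2 / α) := by
    rw [mul_rpow hT.le (by positivity), ← rpow_mul hR.le, mul_div_cancel₀ _ (by linarith),
      rpow_two, mul_comm]
  refine ⟨integrand_eq, ?_⟩
  rw [integrand_eq, radial, integral_rpow_sub_one_div_one_add_rpow_div_Ioi two_pos hα hc,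
    scaling]
  field_simp
end

section
/- Let h be a nonnegative real random variable, α>2, and y>0. Then ∫_{ℝ²} ‖x‖^{−α}·E[h·1_{{h ≤ y‖x‖^α}}] dx = (2π/(α−2))·y^{1−2/α}·E[h^{2/α}], as an identity in [0,∞]. -/
/-! By Tonelli the two integrals can be swapped. For a fixed value `c > 0` of `h`, the constraint
`c ≤ y‖x‖^α` says `‖x‖ ≥ t := (c / y)^(1/α)`, and in polar coordinates
`∫_{‖x‖ ≥ t} ‖x‖^(-α) dx = 2π t^(2-α) / (α - 2)`; since `c t^(2-α) = y^(1-2/α) c^(2/α)`, integrating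
over `ω` gives the moment `E[h^(2/α)]`. -/

open MeasureTheory ProbabilityTheory Filter Real
open scoped ProbabilityTheory ENNReal

local notation "E2" => EuclideanSpace ℝ (Fin 2)

open Set Metric Module

theorem MeasureTheory.lintegral_fun_norm_addHaar {E : Type*} [NormedAddCommGroup E]
    [NormedSpace ℝ E] [Nontrivial E] [FiniteDimensional ℝ E] [MeasurableSpace E] [BorelSpace E]
    (μ : Measure E) [μ.IsAddHaarMeasure] {f : ℝ → ℝ≥0∞} (hf : Measurable f) :
    ∫⁻ x, f ‖x‖ ∂μ =
      finrank ℝ E * μ (ball 0 1) * ∫⁻ r in Ioi 0, ENNReal.ofReal (r ^ (finrank ℝ E - 1)) * f r :=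
  calc ∫⁻ x, f ‖x‖ ∂μ = ∫⁻ x : ({(0 : E)}ᶜ : Set E), f ‖x.1‖ ∂(μ.comap (↑)) := by
        rw [lintegral_subtype_comap (measurableSet_singleton (0 : E)).compl (fun x ↦ f ‖x‖),
          restrict_compl_singleton]
    _ = ∫⁻ p, f p.2 ∂μ.toSphere.prod (.volumeIoiPow (finrank ℝ E - 1)) := by
        simpa using μ.measurePreserving_homeomorphUnitSphereProd.lintegral_comp_emb
          (Homeomorph.measurableEmbedding _) (f ∘ Subtype.val ∘ Prod.snd)
    _ = μ.toSphere univ * ∫⁻ r : Ioi (0 : ℝ), f r ∂.volumeIoiPow (finrank ℝ E - 1) := by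
        rw [lintegral_prod (fun p : sphere (0 : E) 1 × Ioi (0 : ℝ) ↦ f p.2)
          (hf.comp (measurable_subtype_coe.comp measurable_snd)).aemeasurable]
        simp only [lintegral_const, mul_comm]
    _ = _ := by
        rw [Measure.toSphere_apply_univ, Measure.volumeIoiPow,
          lintegral_withDensity_eq_lintegral_mul _
            (measurable_subtype_coe.pow_const _).ennreal_ofReal
            (g := fun r : Ioi (0 : ℝ) ↦ f r) (hf.comp measurable_subtype_coe),
          ← lintegral_subtype_comap measurableSet_Ioi]
        rfl

theorem lintegral_Ioi_rpow_of_lt {a t : ℝ} (ha : a < -1) (ht : 0 < t) :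
    ∫⁻ r in Ioi t, ENNReal.ofReal (r ^ a) = ENNReal.ofReal (-t ^ (a + 1) / (a + 1)) := by
  rw [← integral_Ioi_rpow_of_lt ha ht, ofReal_integral_eq_lintegral_ofReal
    (integrableOn_Ioi_rpow_of_lt ha ht)]
  filter_upwards [ae_restrict_mem measurableSet_Ioi] with r hr
  exact rpow_nonneg (ht.trans hr).le a

theorem lintegral_fun_norm_euclideanSpace_two {f : ℝ → ℝ≥0∞} (hf : Measurable f) :
    ∫⁻ x : E2, f ‖x‖ = 2 * ENNReal.ofReal π * ∫⁻ r in Ioi 0, ENNReal.ofReal r * f r := by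
  simp [lintegral_fun_norm_addHaar volume hf]

theorem lintegral_rpow_neg_norm_of_le_norm {α t : ℝ} (hα : 2 < α) (ht : 0 < t) :
    ∫⁻ x : E2 in {x | t ≤ ‖x‖}, ENNReal.ofReal (‖x‖ ^ (-α)) =
      ENNReal.ofReal (2 * π / (α - 2) * t ^ (2 - α)) := by
  have hIci : MeasurableSet (Ici t) := measurableSet_Ici
  have hg : Measurable fun r : ℝ ↦ ENNReal.ofReal (r ^ (-α)) := by fun_prop
  calc ∫⁻ x : E2 in {x | t ≤ ‖x‖}, ENNReal.ofReal (‖x‖ ^ (-α))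
      = ∫⁻ x : E2, (Ici t).indicator (fun r ↦ ENNReal.ofReal (r ^ (-α))) ‖x‖ :=
        (lintegral_indicator (hIci.preimage measurable_norm) _).symm
    _ = 2 * ENNReal.ofReal π *
          ∫⁻ r in Ici t ∩ Ioi 0, ENNReal.ofReal r * ENNReal.ofReal (r ^ (-α)) := by
        rw [lintegral_fun_norm_euclideanSpace_two (hg.indicator hIci)]
        simp_rw [← indicator_mul_right]
        rw [lintegral_indicator hIci, Measure.restrict_restrict hIci]
    _ = 2 * ENNReal.ofReal π * ∫⁻ r in Ioi t, ENNReal.ofReal (r ^ (1 - α)) := by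
        rw [inter_eq_left.mpr (Ici_subset_Ioi.mpr ht),
          Measure.restrict_congr_set Ioi_ae_eq_Ici.symm]
        refine congrArg _ (setLIntegral_congr_fun measurableSet_Ioi fun r hr ↦ ?_)
        have hr : 0 < r := ht.trans hr
        rw [← ENNReal.ofReal_mul hr.le, sub_eq_add_neg, rpow_add hr, rpow_one]
    _ = _ := by
        rw [lintegral_Ioi_rpow_of_lt (by linarith) ht, ← ENNReal.ofReal_ofNat 2,
          ← ENNReal.ofReal_mul zero_le_two, ← ENNReal.ofReal_mul (by positivity)]
        congr 1
        rw [show 1 - α + 1 = 2 - α by ring, ← neg_sub α 2, neg_div_neg_eq]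
        ring

theorem lintegral_rpow_neg_norm_mul_ite {α y c : ℝ} (hα : 2 < α) (hy : 0 < y) (hc : 0 ≤ c) :
    ∫⁻ x : E2, ENNReal.ofReal (‖x‖ ^ (-α)) * (if c ≤ y * ‖x‖ ^ α then ENNReal.ofReal c else 0) =
      ENNReal.ofReal (2 * π / (α - 2) * y ^ (1 - 2 / α)) * ENNReal.ofReal (c ^ (2 / α)) := by
  rcases hc.eq_or_lt with rfl | hc
  · simp [zero_rpow (by positivity : 2 / α ≠ 0)]
  have hα0 : 0 < α := by linarith
  have hcy : 0 < c / y := div_pos hc hy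
  set t := (c / y) ^ α⁻¹
  have hle_iff (x : E2) : c ≤ y * ‖x‖ ^ α ↔ t ≤ ‖x‖ := by
    rw [rpow_inv_le_iff_of_pos hcy.le (norm_nonneg x) hα0, div_le_iff₀ hy, mul_comm]
  have hct : c * t ^ (2 - α) = y ^ (1 - 2 / α) * c ^ (2 / α) := by
    rw [← rpow_mul hcy.le, show α⁻¹ * (2 - α) = 2 / α - 1 by field_simp, rpow_sub_one hcy.ne',
      div_rpow hc.le hy.le, rpow_sub hy, rpow_one]
    field_simp
  calc _ = ∫⁻ x : E2 in {x | t ≤ ‖x‖}, ENNReal.ofReal c * ENNReal.ofReal (‖x‖ ^ (-α)) := by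
        rw [← lintegral_indicator (measurableSet_le measurable_const measurable_norm)]
        refine lintegral_congr fun x ↦ ?_
        simp only [indicator, mem_ofPred_eq, hle_iff]
        split_ifs <;> simp [mul_comm]
    _ = ENNReal.ofReal c * ENNReal.ofReal (2 * π / (α - 2) * t ^ (2 - α)) := by
        rw [lintegral_const_mul' _ _ ENNReal.ofReal_ne_top,
          lintegral_rpow_neg_norm_of_le_norm hα (by positivity)]
    _ = _ := by
        rw [← ENNReal.ofReal_mul hc.le, ← ENNReal.ofReal_mul (by positivity)]
        congr 1
        linear_combination (2 * π / (α - 2)) * hct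

/-- Exact evaluation of the term `T₁` in the interference tail bound: for a
nonnegative random variable `h`, `α > 2` and `y > 0`,
`∫_{ℝ²} ‖x‖^{-α}·E[h·1_{h ≤ y‖x‖^α}] dx = (2π/(α-2))·y^(1-2/α)·E[h^(2/α)]`,
as an identity in `[0,∞]`. -/
theorem stmt_17
    {Ω : Type*} [MeasureSpace Ω] [IsProbabilityMeasure (ℙ : Measure Ω)]
    (h : Ω → ℝ) (hh_meas : Measurable h) (hh_nonneg : ∀ ω, 0 ≤ h ω)
    (α y : ℝ) (hα : 2 < α) (hy : 0 < y) :
    ∫⁻ x : E2, ENNReal.ofReal (‖x‖ ^ (-α)) *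
        ∫⁻ ω in {ω | h ω ≤ y * ‖x‖ ^ α}, ENNReal.ofReal (h ω) =
      ENNReal.ofReal (2 * π / (α - 2) * y ^ (1 - 2 / α)) *
        ∫⁻ ω, ENNReal.ofReal (h ω ^ (2 / α)) := by
  have hG : Measurable (Function.uncurry fun (x : E2) (ω : Ω) ↦ ENNReal.ofReal (‖x‖ ^ (-α)) *
      (if h ω ≤ y * ‖x‖ ^ α then ENNReal.ofReal (h ω) else 0)) := by
    refine (measurable_fst.norm.pow_const _).ennreal_ofReal.mul (Measurable.ite ?_
      (hh_meas.comp measurable_snd).ennreal_ofReal measurable_const)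
    exact measurableSet_le (hh_meas.comp measurable_snd)
      ((measurable_fst.norm.pow_const _).const_mul y)
  calc _ = ∫⁻ x : E2, ∫⁻ ω, ENNReal.ofReal (‖x‖ ^ (-α)) *
        (if h ω ≤ y * ‖x‖ ^ α then ENNReal.ofReal (h ω) else 0) := by
        refine lintegral_congr fun x ↦ ?_
        rw [← lintegral_indicator (measurableSet_le hh_meas measurable_const),
          ← lintegral_const_mul' _ _ ENNReal.ofReal_ne_top]
        rfl
    _ = ∫⁻ ω, ∫⁻ x : E2, ENNReal.ofReal (‖x‖ ^ (-α)) *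
        (if h ω ≤ y * ‖x‖ ^ α then ENNReal.ofReal (h ω) else 0) :=
        lintegral_lintegral_swap hG.aemeasurable
    _ = ∫⁻ ω, ENNReal.ofReal (2 * π / (α - 2) * y ^ (1 - 2 / α)) *
        ENNReal.ofReal (h ω ^ (2 / α)) :=
        lintegral_congr fun ω ↦ lintegral_rpow_neg_norm_mul_ite hα hy (hh_nonneg ω)
    _ = _ := lintegral_const_mul _ (hh_meas.pow_const _).ennreal_ofReal
end

section
/- Assume additionally that g satisfies lim_{‖x‖→∞} g(x)/g(x−y)=1 for every y∈ℝ². Then for all T>0 and c̄>0, lim_{R→∞} P₂(R,c̄) = exp(−c̄/(1+1/T)) = exp(−c̄T/(1+T)). -/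
open MeasureTheory ProbabilityTheory Filter Real
open scoped ProbabilityTheory

local notation "E2" => EuclideanSpace ℝ (Fin 2)

open Topology

/-! Both limits come from dominated convergence. Let `e` be the unit vector of the first axis.
Since `g` is radially nonincreasing, `g (w - R • e)` lies between `g ((R + ‖w‖) • e)` and
`g ((R - ‖w‖) • e)`, and the ratio hypothesis along the ray makes both asymptotic to `g (R • e)`.
Hence the integrand of `β R y`, which lies in `[0, 1]` off a null set, tends pointwise to
`1 / (1 + 1 / T)`, so `β R y → 1 / (1 + 1 / T)`; as `exp (-(c̄ β R y))` stays uniformly bounded,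
`P₂ R → exp (-(c̄ / (1 + 1 / T)))`. -/

lemma tendsto_integral_mul_of_norm_le {α ι : Type*} [MeasurableSpace α] {μ : Measure α}
    {l : Filter ι} [l.IsCountablyGenerated] {F : ι → α → ℝ} {G f : α → ℝ} (C : ℝ)
    (hF_meas : ∀ᶠ i in l, AEStronglyMeasurable (F i) μ)
    (hF_le : ∀ᶠ i in l, ∀ᵐ x ∂μ, ‖F i x‖ ≤ C) (hf : Integrable f μ)
    (hF_lim : ∀ᵐ x ∂μ, Tendsto (fun i => F i x) l (𝓝 (G x))) :
    Tendsto (fun i => ∫ x, F i x * f x ∂μ) l (𝓝 (∫ x, G x * f x ∂μ)) := by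
  refine tendsto_integral_filter_of_dominated_convergence (fun x => C * ‖f x‖)
    (hF_meas.mono fun i hi => hi.mul hf.aestronglyMeasurable) ?_ (hf.norm.const_mul C)
    (hF_lim.mono fun x hx => hx.mul_const (f x))
  filter_upwards [hF_le] with i hi
  filter_upwards [hi] with x hx
  rw [norm_mul]
  exact mul_le_mul_of_nonneg_right hx (norm_nonneg _)

lemma tendsto_div_div_add {ι : Type*} {l : Filter ι} {u v : ι → ℝ} {T : ℝ}
    (hT : 1 + 1 / T ≠ 0) (h : Tendsto (fun i => u i / v i) l (𝓝 1)) :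
    Tendsto (fun i => u i / (v i / T + u i)) l (𝓝 (1 + 1 / T)⁻¹) := by
  have hu : ∀ᶠ i in l, u i ≠ 0 :=
    (h.eventually_ne one_ne_zero).mono fun i hi hu => hi (by rw [hu, zero_div])
  have hvu : Tendsto (fun i => v i / u i) l (𝓝 1) := by simpa using h.inv₀ one_ne_zero
  refine (((hvu.div_const T).const_add 1).inv₀ (by simpa using hT)).congr' ?_
  filter_upwards [hu] with i hi
  rw [← inv_div _ (u i), add_div, div_self hi, div_right_comm, add_comm]

lemma norm_div_div_add_le_one {a b T : ℝ} (ha : 0 ≤ a) (hb : 0 < b) (hT : 0 < T) :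
    ‖b / (a / T + b)‖ ≤ 1 := by
  rw [Real.norm_of_nonneg (by positivity), div_le_one (by positivity)]
  linarith [div_nonneg ha hT.le]

lemma norm_exp_neg_mul_le {c b M : ℝ} (hb : ‖b‖ ≤ M) : ‖exp (-(c * b))‖ ≤ exp (|c| * M) := by
  rw [Real.norm_of_nonneg (exp_pos _).le, exp_le_exp]
  calc -(c * b) ≤ |c * b| := neg_le_abs _
    _ = |c| * ‖b‖ := abs_mul c b
    _ ≤ |c| * M := mul_le_mul_of_nonneg_left hb (abs_nonneg c)

section Ray

variable {E : Type*} [NormedAddCommGroup E] [NormedSpace ℝ E] {g : E → ℝ} {e : E}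

lemma tendsto_smul_comap_norm_atTop (he : e ≠ 0) :
    Tendsto (fun R : ℝ => R • e) atTop (comap norm atTop) := by
  rw [tendsto_comap_iff]
  simpa [Function.comp_def, norm_smul] using
    tendsto_abs_atTop_atTop.atTop_mul_const (norm_pos_iff.2 he)

lemma tendsto_div_add_smul
    (hg_ratio : ∀ y, Tendsto (fun x => g x / g (x - y)) (comap norm atTop) (𝓝 1))
    (he : e ≠ 0) (u : ℝ) :
    Tendsto (fun R : ℝ => g ((R + u) • e) / g (R • e)) atTop (𝓝 1) := by
  have := (hg_ratio (u • e)).comp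
    ((tendsto_smul_comap_norm_atTop he).comp (tendsto_atTop_add_const_right _ u tendsto_id))
  simpa [Function.comp_def, add_smul] using this

lemma tendsto_div_sub_smul
    (hg_pos : ∀ x, x ≠ 0 → 0 < g x)
    (hg_mono : ∀ x y, x ≠ 0 → y ≠ 0 → ‖x‖ ≤ ‖y‖ → g y ≤ g x)
    (hg_ratio : ∀ y, Tendsto (fun x => g x / g (x - y)) (comap norm atTop) (𝓝 1))
    (he : ‖e‖ = 1) (w : E) :
    Tendsto (fun R : ℝ => g (w - R • e) / g (R • e)) atTop (𝓝 1) := by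
  have he0 : e ≠ 0 := norm_ne_zero_iff.1 (by rw [he]; exact one_ne_zero)
  have hnorm : ∀ R : ℝ, 0 < R → ‖R • e‖ = R := fun R hR => by
    rw [norm_smul, he, mul_one, Real.norm_of_nonneg hR.le]
  have hne : ∀ R : ℝ, 0 < R → R • e ≠ 0 := fun R hR => smul_ne_zero hR.ne' he0
  have hsqueeze : ∀ᶠ R in atTop, g ((R + ‖w‖) • e) ≤ g (w - R • e) ∧
      g (w - R • e) ≤ g ((R + -‖w‖) • e) ∧ 0 < g (R • e) := by
    filter_upwards [eventually_gt_atTop ‖w‖] with R hR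
    have hR0 : 0 < R := (norm_nonneg w).trans_lt hR
    have hlow : R - ‖w‖ ≤ ‖w - R • e‖ := by
      have := norm_sub_norm_le (R • e) w
      rw [norm_sub_rev, hnorm R hR0] at this
      linarith
    have hup : ‖w - R • e‖ ≤ R + ‖w‖ := by
      have := norm_sub_le w (R • e)
      rw [hnorm R hR0] at this
      linarith
    have hw : w - R • e ≠ 0 := norm_pos_iff.1 (by linarith)
    refine ⟨hg_mono _ _ hw (hne _ (by positivity)) ?_,
      hg_mono _ _ (hne _ (by linarith)) hw ?_, hg_pos _ (hne R hR0)⟩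
    · rwa [hnorm _ (by positivity)]
    · rwa [hnorm _ (by linarith), ← sub_eq_add_neg]
  exact tendsto_of_tendsto_of_tendsto_of_le_of_le'
    (tendsto_div_add_smul hg_ratio he0 ‖w‖) (tendsto_div_add_smul hg_ratio he0 (-‖w‖))
    (hsqueeze.mono fun R h => div_le_div_of_nonneg_right h.1 h.2.2.le)
    (hsqueeze.mono fun R h => div_le_div_of_nonneg_right h.2.1 h.2.2.le)

end Ray

section Integral

variable {E : Type*} [NormedAddCommGroup E] [MeasurableSpace E] {μ : Measure E} {g f : E → ℝ}
  {T : ℝ}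

lemma ae_norm_div_div_add_le_one [NullSingletonClass μ] (hg_pos : ∀ x, x ≠ 0 → 0 < g x)
    (hT : 0 < T) {c : E} (hc : c ≠ 0) (y : E) :
    ∀ᵐ x ∂μ, ‖g (x - y - c) / (g c / T + g (x - y - c))‖ ≤ 1 := by
  filter_upwards [μ.ae_ne (y + c)] with x hx
  exact norm_div_div_add_le_one (hg_pos c hc).le (hg_pos _ (by rwa [sub_sub, sub_ne_zero])) hT

lemma norm_integral_div_div_add_mul_le [NullSingletonClass μ] (hg_pos : ∀ x, x ≠ 0 → 0 < g x)
    (hT : 0 < T) (hf : Integrable f μ) {c : E} (hc : c ≠ 0) (y : E) :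
    ‖∫ x, g (x - y - c) / (g c / T + g (x - y - c)) * f x ∂μ‖ ≤ ∫ x, ‖f x‖ ∂μ := by
  refine norm_integral_le_of_norm_le hf.norm ?_
  filter_upwards [ae_norm_div_div_add_le_one hg_pos hT hc y] with x hx
  rw [norm_mul]
  exact mul_le_of_le_one_left (norm_nonneg _) hx

lemma tendsto_integral_div_div_add_mul [NormedSpace ℝ E] [BorelSpace E] [NullSingletonClass μ]
    (hT : 0 < T) (hg_pos : ∀ x, x ≠ 0 → 0 < g x)
    (hg_mono : ∀ x y, x ≠ 0 → y ≠ 0 → ‖x‖ ≤ ‖y‖ → g y ≤ g x)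
    (hg_ratio : ∀ y, Tendsto (fun x => g x / g (x - y)) (comap norm atTop) (𝓝 1))
    (hg_meas : Measurable g) {e : E} (he : ‖e‖ = 1) (hf : Integrable f μ) (y : E) :
    Tendsto (fun R : ℝ => ∫ x, g (x - y - R • e) / (g (R • e) / T + g (x - y - R • e)) * f x ∂μ)
      atTop (𝓝 ((1 + 1 / T)⁻¹ * ∫ x, f x ∂μ)) := by
  have he0 : e ≠ 0 := norm_ne_zero_iff.1 (by rw [he]; exact one_ne_zero)
  rw [← integral_const_mul]
  refine tendsto_integral_mul_of_norm_le 1 (Eventually.of_forall fun R => ?_) ?_ hf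
    (ae_of_all _ fun x => tendsto_div_div_add (by positivity)
      (tendsto_div_sub_smul hg_pos hg_mono hg_ratio he (x - y)))
  · exact Measurable.aestronglyMeasurable (by fun_prop)
  · filter_upwards [eventually_gt_atTop 0] with R hR
    exact ae_norm_div_div_add_le_one hg_pos hT (smul_ne_zero hR.ne' he0) y

lemma aestronglyMeasurable_integral_div_div_add_mul [BorelSpace E] [SecondCountableTopology E]
    [SFinite μ] (hg_meas : Measurable g) (hf : AEStronglyMeasurable f μ) (c : E) :
    AEStronglyMeasurable (fun y => ∫ x, g (x - y - c) / (g c / T + g (x - y - c)) * f x ∂μ) μ :=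
  AEStronglyMeasurable.integral_prod_right'
    (f := fun p : E × E => g (p.2 - p.1 - c) / (g c / T + g (p.2 - p.1 - c)) * f p.2)
    ((Measurable.aestronglyMeasurable (by fun_prop)).mul hf.comp_snd)

end Integral

theorem stmt_19_general
    (g f : E2 → ℝ) (T cbar : ℝ)
    (hT : 0 < T)
    (hg_pos : ∀ x : E2, x ≠ 0 → 0 < g x)
    (hg_cont : ContinuousOn g {(0 : E2)}ᶜ)
    (hg_mono : ∀ x y : E2, x ≠ 0 → y ≠ 0 → ‖x‖ ≤ ‖y‖ → g y ≤ g x)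
    (hg_ratio : ∀ y : E2,
      Tendsto (fun x : E2 => g x / g (x - y)) (Filter.comap norm atTop) (nhds 1))
    (hf_prob : ∫ x, f x = 1)
    (z : ℝ → E2) (hz : ∀ R, z R = EuclideanSpace.single (0 : Fin 2) R)
    (β : ℝ → E2 → ℝ)
    (hβ : ∀ R y, β R y = ∫ x, g (x - y - z R) / (g (z R) / T + g (x - y - z R)) * f x)
    (P2 : ℝ → ℝ)
    (hP2 : ∀ R, P2 R = ∫ y, Real.exp (-(cbar * β R y)) * f y) :
    Tendsto P2 atTop (nhds (Real.exp (-(cbar / (1 + 1 / T))))) := by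
  set e : E2 := EuclideanSpace.single 0 1
  have he : ‖e‖ = 1 := by simp [e]
  have hz_smul : ∀ R, z R = R • e := fun R => by
    ext i; fin_cases i <;> simp [hz, e]
  have hf_int : Integrable f := Integrable.of_integral_ne_zero (by rw [hf_prob]; exact one_ne_zero)
  have hg_meas : Measurable g := measurable_of_continuousOn_compl_singleton 0 hg_cont
  simp only [hz_smul] at hβ
  have hβ_lim : ∀ y, Tendsto (β · y) atTop (𝓝 (1 + 1 / T)⁻¹) := fun y => by
    simpa [hβ, hf_prob] using
      tendsto_integral_div_div_add_mul hT hg_pos hg_mono hg_ratio hg_meas he hf_int y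
  have hβ_le : ∀ᶠ R in atTop, ∀ y, ‖β R y‖ ≤ ∫ x, ‖f x‖ := by
    filter_upwards [eventually_gt_atTop 0] with R hR y
    rw [hβ]
    exact norm_integral_div_div_add_mul_le hg_pos hT hf_int (smul_ne_zero hR.ne' (by simp [e])) y
  have hβ_meas : ∀ R, AEStronglyMeasurable (β R) := fun R => by
    simpa only [← hβ] using
      aestronglyMeasurable_integral_div_div_add_mul (T := T) hg_meas hf_int.1 (R • e)
  have hlim := tendsto_integral_mul_of_norm_le (F := fun R y => exp (-(cbar * β R y)))
    (G := fun _ => exp (-(cbar * (1 + 1 / T)⁻¹)))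
    (exp (|cbar| * ∫ x, ‖f x‖))
    (Eventually.of_forall fun R => (continuous_exp.comp_aestronglyMeasurable
      ((hβ_meas R).const_mul cbar).neg)) ?_ hf_int
    (ae_of_all _ fun y => (continuous_exp.tendsto _).comp (((hβ_lim y).const_mul cbar).neg))
  · rwa [integral_const_mul, hf_prob, mul_one, ← div_eq_mul_inv, ← funext hP2] at hlim
  filter_upwards [hβ_le] with R hR
  exact ae_of_all _ fun y => norm_exp_neg_mul_le (hR y)

/-- Limit of the own-cluster factor of the success probability at large
transmitter–receiver distances: `P₂(R,c̄) → exp(-c̄/(1+1/T))` as `R → ∞`. -/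
theorem stmt_19
    (g f : E2 → ℝ) (T cbar : ℝ)
    (hT : 0 < T) (hcbar : 0 < cbar)
    (hg_pos : ∀ x : E2, x ≠ 0 → 0 < g x)
    (hg_cont : ContinuousOn g {(0 : E2)}ᶜ)
    (hg_mono : ∀ x y : E2, x ≠ 0 → y ≠ 0 → ‖x‖ ≤ ‖y‖ → g y ≤ g x)
    (hg_int : ∀ ε : ℝ, 0 < ε → IntegrableOn g (Metric.ball (0 : E2) ε)ᶜ)
    (hg_ratio : ∀ y : E2,
      Tendsto (fun x : E2 => g x / g (x - y)) (Filter.comap norm atTop) (nhds 1))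
    (hf_meas : Measurable f) (hf_nonneg : ∀ x, 0 ≤ f x)
    (hf_prob : ∫ x, f x = 1)
    (hf_iso : ∀ x y : E2, ‖x‖ = ‖y‖ → f x = f y)
    (z : ℝ → E2) (hz : ∀ R, z R = EuclideanSpace.single (0 : Fin 2) R)
    (β : ℝ → E2 → ℝ)
    (hβ : ∀ R y, β R y = ∫ x, g (x - y - z R) / (g (z R) / T + g (x - y - z R)) * f x)
    (P2 : ℝ → ℝ)
    (hP2 : ∀ R, P2 R = ∫ y, Real.exp (-(cbar * β R y)) * f y) :
    Tendsto P2 atTop (nhds (Real.exp (-(cbar / (1 + 1 / T))))) :=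
  stmt_19_general g f T cbar hT hg_pos hg_cont hg_mono hg_ratio hf_prob z hz β hβ P2 hP2
end
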